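/- arXiv:2310.12265 — 4 statements merged into one kernel-verified Lean document; each statement's English description precedes it below -/
import Mathlib

section
/- Let G be a group and f : G → ℝ≥0 a subadditive function with f(x) = 0 if and only if x = id, and suppose furthermore that f is constant on conjugacy classes, i.e., f(h⁻¹gh) = f(g) for all g, h ∈ G. Then for any x ≤_f z in G, the map y ↦ x y⁻¹ z maps the interval [x, z]_f = {y : x ≤_f y and y ≤_f z} bijectively to itself and reverses the order ≤_f on this interval (it is a poset antiautomorphism of [x, z]_f); in particular x y⁻¹ z ∈ [x, z]_f whenever y ∈ [x, z]_f. -/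
/-!
Write `d a b = f (a⁻¹ * b)`. Subadditivity is the triangle inequality for `d`, and
`x ≤_f y` says that `x` lies between `1` and `y` (`d 1 x + d x y = d 1 y`). Given `x ≤_f z`,
the interval `[x, z]_f` is then the set of points between `x` and `z`, and on it `y₁ ≤_f y₂`
means that `y₁` lies between `x` and `y₂`, equivalently that `y₂` lies between `y₁` and `z`.
Because `f` is a class function, `y ↦ x * y⁻¹ * z` reverses distances, `d (φ a) (φ b) = d b a`,
and swaps `x` and `z`. Such a map reverses betweenness, which gives all three claims.
-/

open Set

section Between

variable {α M : Type*}

def Between [Add M] (d : α → α → M) (a b c : α) : Prop := d a b + d b c = d a c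

section

variable [AddCommMonoid M] {d : α → α → M}

theorem between_map_iff_of_antiIsometry {σ : α → α} (hσ : ∀ a b, d (σ a) (σ b) = d b a)
    {a b c : α} : Between d (σ c) (σ b) (σ a) ↔ Between d a b c := by
  rw [Between, Between, hσ, hσ, hσ, add_comm]

theorem mapsTo_between_of_antiIsometry {σ : α → α} (hσ : ∀ a b, d (σ a) (σ b) = d b a)
    {x z : α} (hx : σ x = z) (hz : σ z = x) :
    MapsTo σ {y | Between d x y z} {y | Between d x y z} := fun y hy => by
  simpa only [mem_ofPred_eq, hx, hz] using (between_map_iff_of_antiIsometry hσ).2 hy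

theorem Between.between_left_iff_between_right [IsCancelAdd M] {x y₁ y₂ z : α}
    (h₁ : Between d x y₁ z) (h₂ : Between d x y₂ z) :
    Between d x y₁ y₂ ↔ Between d y₁ y₂ z := by
  unfold Between at *
  constructor
  · intro h
    refine add_left_cancel (a := d x y₁) ?_
    rw [h₁, ← add_assoc, h, h₂]
  · intro h
    refine add_right_cancel (b := d y₂ z) ?_
    rw [h₂, add_assoc, h, h₁]

end

variable [AddCommMonoid M] [PartialOrder M] [IsOrderedCancelAddMonoid M] {d : α → α → M}

theorem between_left_and_between_right_iff (htri : ∀ a b c, d a c ≤ d a b + d b c)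
    {o x y z : α} (hxz : Between d o x z) :
    Between d o x y ∧ Between d o y z ↔ Between d x y z := by
  unfold Between at *
  constructor
  · rintro ⟨hxy, hyz⟩
    refine add_left_cancel (a := d o x) ?_
    rw [hxz, ← add_assoc, hxy, hyz]
  · intro hxyz
    have hsum : d o x + d x y + d y z = d o z := by rw [add_assoc, hxyz, hxz]
    have hyz : d o y + d y z = d o z := by
      refine le_antisymm ?_ (htri o y z)
      calc d o y + d y z ≤ d o x + d x y + d y z := by gcongr; exact htri o x y
        _ = d o z := hsum
    exact ⟨add_right_cancel (hsum.trans hyz.symm), hyz⟩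

theorem between_iff_between_of_between (htri : ∀ a b c, d a c ≤ d a b + d b c)
    {o x y₁ y₂ : α} (h₁ : Between d o x y₁) (h₂ : Between d o x y₂) :
    Between d o y₁ y₂ ↔ Between d x y₁ y₂ := by
  rw [← between_left_and_between_right_iff htri h₂, and_iff_right h₁]

theorem between_iff_between_map_of_antiIsometry (htri : ∀ a b c, d a c ≤ d a b + d b c)
    {σ : α → α} (hσ : ∀ a b, d (σ a) (σ b) = d b a) {o x z y₁ y₂ : α} (hx : σ x = z)
    (hz : σ z = x) (hxz : Between d o x z) (h₁ : Between d x y₁ z) (h₂ : Between d x y₂ z) :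
    Between d o y₁ y₂ ↔ Between d o (σ y₂) (σ y₁) := by
  have hleft : ∀ {y}, Between d x y z → Between d o x y := fun hy =>
    ((between_left_and_between_right_iff htri hxz).2 hy).1
  have hmaps := mapsTo_between_of_antiIsometry hσ hx hz
  rw [between_iff_between_of_between htri (hleft h₁) (hleft h₂),
    between_iff_between_of_between htri (hleft (hmaps h₂)) (hleft (hmaps h₁)),
    h₁.between_left_iff_between_right h₂, ← between_map_iff_of_antiIsometry hσ, hz]

end Between

section DivDist

variable {G M : Type*} [Group G]

def divDist (f : G → M) (a b : G) : M := f (a⁻¹ * b)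

variable {f : G → M}

theorem divDist_one_left (y : G) : divDist f 1 y = f y := by
  rw [divDist, inv_one, one_mul]

theorem between_divDist_one_iff [Add M] (a b : G) :
    Between (divDist f) 1 a b ↔ f a + f (a⁻¹ * b) = f b := by
  rw [Between, divDist_one_left, divDist_one_left, divDist]

theorem divDist_triangle [Add M] [LE M] (hsub : ∀ x y, f (x * y) ≤ f x + f y) (a b c : G) :
    divDist f a c ≤ divDist f a b + divDist f b c := by
  simpa only [divDist, mul_assoc, mul_inv_cancel_left] using hsub (a⁻¹ * b) (b⁻¹ * c)

theorem map_mul_comm_of_conj (hconj : ∀ g h : G, f (h⁻¹ * g * h) = f g) (a b : G) :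
    f (a * b) = f (b * a) := by
  simpa only [mul_assoc, inv_mul_cancel_left] using hconj (b * a) b

theorem divDist_mul_inv_mul (hconj : ∀ g h : G, f (h⁻¹ * g * h) = f g) (x z a b : G) :
    divDist f (x * a⁻¹ * z) (x * b⁻¹ * z) = divDist f b a := by
  have h : (x * a⁻¹ * z)⁻¹ * (x * b⁻¹ * z) = z⁻¹ * (a * b⁻¹) * z := by group
  rw [divDist, divDist, h, hconj, map_mul_comm_of_conj hconj]

end DivDist

theorem stmt1_general {G : Type*} [Group G] (f : G → NNReal)
    (hsub : ∀ x y : G, f (x * y) ≤ f x + f y)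
    (hconj : ∀ g h : G, f (h⁻¹ * g * h) = f g)
    (x z : G) (hxz : f x + f (x⁻¹ * z) = f z) :
    (∀ y ∈ {y : G | (f x + f (x⁻¹ * y) = f y) ∧ (f y + f (y⁻¹ * z) = f z)},
        x * y⁻¹ * z ∈ {y : G | (f x + f (x⁻¹ * y) = f y) ∧ (f y + f (y⁻¹ * z) = f z)}) ∧
    Set.BijOn (fun y => x * y⁻¹ * z)
      {y : G | (f x + f (x⁻¹ * y) = f y) ∧ (f y + f (y⁻¹ * z) = f z)}
      {y : G | (f x + f (x⁻¹ * y) = f y) ∧ (f y + f (y⁻¹ * z) = f z)} ∧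
    (∀ y₁ ∈ {y : G | (f x + f (x⁻¹ * y) = f y) ∧ (f y + f (y⁻¹ * z) = f z)},
      ∀ y₂ ∈ {y : G | (f x + f (x⁻¹ * y) = f y) ∧ (f y + f (y⁻¹ * z) = f z)},
        (f y₁ + f (y₁⁻¹ * y₂) = f y₂ ↔
          f (x * y₂⁻¹ * z) + f ((x * y₂⁻¹ * z)⁻¹ * (x * y₁⁻¹ * z)) = f (x * y₁⁻¹ * z))) := by
  have htri := divDist_triangle hsub
  have hxz' := (between_divDist_one_iff x z).2 hxz
  have hS : {y : G | (f x + f (x⁻¹ * y) = f y) ∧ (f y + f (y⁻¹ * z) = f z)} =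
      {y | Between (divDist f) x y z} := by
    ext y
    simp only [mem_ofPred_eq, ← between_divDist_one_iff]
    exact between_left_and_between_right_iff htri hxz'
  have hφx : x * x⁻¹ * z = z := by group
  have hφz : x * z⁻¹ * z = x := by group
  have hmaps := mapsTo_between_of_antiIsometry (divDist_mul_inv_mul hconj x z) hφx hφz
  have hinv : InvOn (fun w => z * w⁻¹ * x) (fun y => x * y⁻¹ * z)
      {y | Between (divDist f) x y z} {y | Between (divDist f) x y z} :=
    ⟨fun y _ => by group, fun w _ => by group⟩
  rw [hS]
  refine ⟨fun y hy => hmaps hy, hinv.bijOn hmaps ?_, fun y₁ h₁ y₂ h₂ => ?_⟩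
  · exact mapsTo_between_of_antiIsometry (divDist_mul_inv_mul hconj z x) (by group) (by group)
  · rw [← between_divDist_one_iff, ← between_divDist_one_iff]
    exact between_iff_between_map_of_antiIsometry htri (divDist_mul_inv_mul hconj x z)
      hφx hφz hxz' h₁ h₂

/-- Let `G` be a group and `f : G → ℝ≥0` a subadditive function with `f x = 0` iff `x = 1`,
and suppose `f` is constant on conjugacy classes.  Then for any `x ≤_f z`, the map
`y ↦ x * y⁻¹ * z` maps the interval `[x, z]_f` bijectively to itself and reverses the
order `≤_f` on it; in particular `x * y⁻¹ * z ∈ [x, z]_f` whenever `y ∈ [x, z]_f`. -/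
theorem stmt1 {G : Type*} [Group G] (f : G → NNReal)
    (hsub : ∀ x y : G, f (x * y) ≤ f x + f y)
    (hzero : ∀ x : G, f x = 0 ↔ x = 1)
    (hconj : ∀ g h : G, f (h⁻¹ * g * h) = f g)
    (x z : G) (hxz : f x + f (x⁻¹ * z) = f z) :
    (∀ y ∈ {y : G | (f x + f (x⁻¹ * y) = f y) ∧ (f y + f (y⁻¹ * z) = f z)},
        x * y⁻¹ * z ∈ {y : G | (f x + f (x⁻¹ * y) = f y) ∧ (f y + f (y⁻¹ * z) = f z)}) ∧
    Set.BijOn (fun y => x * y⁻¹ * z)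
      {y : G | (f x + f (x⁻¹ * y) = f y) ∧ (f y + f (y⁻¹ * z) = f z)}
      {y : G | (f x + f (x⁻¹ * y) = f y) ∧ (f y + f (y⁻¹ * z) = f z)} ∧
    (∀ y₁ ∈ {y : G | (f x + f (x⁻¹ * y) = f y) ∧ (f y + f (y⁻¹ * z) = f z)},
      ∀ y₂ ∈ {y : G | (f x + f (x⁻¹ * y) = f y) ∧ (f y + f (y⁻¹ * z) = f z)},
        (f y₁ + f (y₁⁻¹ * y₂) = f y₂ ↔
          f (x * y₂⁻¹ * z) + f ((x * y₂⁻¹ * z)⁻¹ * (x * y₁⁻¹ * z)) = f (x * y₁⁻¹ * z))) :=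
  stmt1_general f hsub hconj x z hxz
end

section
/- Let G be a group and f : G → ℕ a subadditive function such that f(x) = 0 if and only if x = id. Then the poset (G, ≤_f) is f-graded — meaning that whenever y covers x in the order ≤_f one has f(y) = f(x) + 1 — if and only if f equals the length function ℓ_T of G with respect to the generating set T := {t ∈ G : f(t) = 1}, where ℓ_T(x) is the least k such that x is a product of k elements of T (in particular, in that case T generates G). -/
/-!
If every cover raises `f` by one, any `x ≠ 1` lies above an element `z` that it covers (take
`z <_f x` with `f z` maximal), so `f (z⁻¹ * x) = 1` and induction on `f x` writes `x` as a product
of `f x` elements of `T`; subadditivity shows no shorter product exists. Conversely, if `f = ℓ_T`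
and `x <_f y` with `f (x⁻¹ * y) ≥ 2`, peeling the first letter `t` off a minimal word for
`x⁻¹ * y` gives `x <_f x * t <_f y`, so `y` does not cover `x`.
-/

lemma apply_list_prod_le_length {M : Type*} [Monoid M] {f : M → ℕ}
    (hsub : ∀ x y : M, f (x * y) ≤ f x + f y) (hone : f 1 = 0) :
    ∀ l : List M, (∀ t ∈ l, f t = 1) → f l.prod ≤ l.length
  | [], _ => by simp [hone]
  | t :: l, hl => by
    have ht := hl t List.mem_cons_self
    have hrest := apply_list_prod_le_length hsub hone l fun s hs => hl s (List.mem_cons_of_mem _ hs)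
    have := hsub t l.prod
    simp only [List.prod_cons, List.length_cons]
    omega

section

variable {G : Type*} [Group G] {f : G → ℕ}

/-- The strict order `x <_f y`. -/
def FLt (f : G → ℕ) (x y : G) : Prop := f x + f (x⁻¹ * y) = f y ∧ x ≠ y

lemma FLt.apply_lt (hzero : ∀ x : G, f x = 0 ↔ x = 1) {x y : G} (h : FLt f x y) : f x < f y := by
  have : f (x⁻¹ * y) ≠ 0 := fun h0 => h.2 (inv_mul_eq_one.mp ((hzero _).mp h0))
  have := h.1
  omega

lemma exists_covBy_of_ne_one (hzero : ∀ x : G, f x = 0 ↔ x = 1) {x : G} (hx : x ≠ 1) :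
    ∃ z, FLt f z x ∧ ¬ ∃ w, FLt f z w ∧ FLt f w x := by
  set S := {z | FLt f z x}
  have hone : f 1 = 0 := (hzero 1).2 rfl
  have hS : (f '' S).Nonempty := ⟨f 1, 1, ⟨by simp [hone], hx.symm⟩, rfl⟩
  have hbdd : BddAbove (f '' S) := ⟨f x, by rintro _ ⟨z, hz, rfl⟩; exact (hz.apply_lt hzero).le⟩
  obtain ⟨z, hz, hmax⟩ := Nat.sSup_mem hS hbdd
  refine ⟨z, hz, fun ⟨w, hzw, hwx⟩ => ?_⟩
  have : f w ≤ f z := hmax ▸ le_csSup hbdd ⟨w, hwx, rfl⟩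
  exact (hzw.apply_lt hzero).not_ge this

lemma exists_list_of_graded (hzero : ∀ x : G, f x = 0 ↔ x = 1)
    (hgraded : ∀ x y : G, FLt f x y → (¬ ∃ z, FLt f x z ∧ FLt f z y) → f y = f x + 1) (x : G) :
    ∃ l : List G, (∀ t ∈ l, f t = 1) ∧ l.length = f x ∧ l.prod = x := by
  induction hn : f x using Nat.strong_induction_on generalizing x with
  | _ n ih =>
    by_cases hx : x = 1
    · exact ⟨[], by simp, by simp [← hn, hx, (hzero 1).2], by simp [hx]⟩
    obtain ⟨z, hzx, hcov⟩ := exists_covBy_of_ne_one hzero hx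
    have hstep := hgraded z x hzx hcov
    obtain ⟨l, hl, hlen, hprod⟩ := ih (f z) (hn ▸ hzx.apply_lt hzero) z rfl
    have hletter : f (z⁻¹ * x) = 1 := by have := hzx.1; omega
    refine ⟨l ++ [z⁻¹ * x], ?_, ?_, by simp [hprod]⟩
    · simp only [List.mem_append, List.mem_singleton]
      rintro t (ht | rfl)
      exacts [hl t ht, hletter]
    · simp only [List.length_append, List.length_singleton]
      omega

lemma graded_of_exists_list (hsub : ∀ x y : G, f (x * y) ≤ f x + f y)
    (hzero : ∀ x : G, f x = 0 ↔ x = 1)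
    (hgen : ∀ x : G, ∃ l : List G, (∀ t ∈ l, f t = 1) ∧ l.length = f x ∧ l.prod = x)
    {x y : G} (hxy : FLt f x y) (hcov : ¬ ∃ z, FLt f x z ∧ FLt f z y) : f y = f x + 1 := by
  obtain ⟨l, hl, hlen, hprod⟩ := hgen (x⁻¹ * y)
  have hlt := hxy.apply_lt hzero
  have hxy' := hxy.1
  match l, hl, hlen, hprod with
  | [], _, hlen, _ => simp at hlen; omega
  | t :: rest, hl, hlen, hprod =>
    simp only [List.prod_cons, List.length_cons] at hlen hprod
    have ht := hl t List.mem_cons_self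
    have hrest := apply_list_prod_le_length hsub ((hzero 1).2 rfl) rest
      fun s hs => hl s (List.mem_cons_of_mem _ hs)
    have hxt : x⁻¹ * (x * t) = t := inv_mul_cancel_left x t
    have hty : (x * t)⁻¹ * y = rest.prod := by
      rw [mul_inv_rev, mul_assoc, ← hprod, inv_mul_cancel_left]
    have hz := hsub x t
    have hy := hsub (x * t) ((x * t)⁻¹ * y)
    rw [mul_inv_cancel_left, hty] at hy
    by_contra hne
    exact hcov ⟨x * t, ⟨by rw [hxt]; omega, ne_of_apply_ne f (by omega)⟩,
      ⟨by rw [hty]; omega, ne_of_apply_ne f (by omega)⟩⟩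

end

/-- Let `G` be a group and `f : G → ℕ` a subadditive function with `f x = 0` iff `x = 1`.
The poset `(G, ≤_f)` is `f`-graded (each cover relation raises `f` by exactly `1`) if and
only if `f` is the length function `ℓ_T` of `G` with respect to the generating set
`T = {t : G | f t = 1}`, i.e., for every `x`, `f x` is the least `k` such that `x` is a
product of `k` elements of `T` (in particular every `x` is such a product, so `T`
generates `G`). -/
theorem stmt2 {G : Type*} [Group G] (f : G → ℕ)
    (hsub : ∀ x y : G, f (x * y) ≤ f x + f y)
    (hzero : ∀ x : G, f x = 0 ↔ x = 1) :
    (∀ x y : G,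
        (f x + f (x⁻¹ * y) = f y ∧ x ≠ y) →
        (¬ ∃ z : G, (f x + f (x⁻¹ * z) = f z ∧ x ≠ z) ∧
          (f z + f (z⁻¹ * y) = f y ∧ z ≠ y)) →
        f y = f x + 1) ↔
    (∀ x : G,
        (∃ l : List G, (∀ t ∈ l, f t = 1) ∧ l.length = f x ∧ l.prod = x) ∧
        (∀ l : List G, (∀ t ∈ l, f t = 1) → l.prod = x → f x ≤ l.length)) :=
  ⟨fun hgraded x => ⟨exists_list_of_graded hzero hgraded x, fun l hl hprod =>
      hprod ▸ apply_list_prod_le_length hsub ((hzero 1).2 rfl) l hl⟩,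
    fun hlen _ _ => graded_of_exists_list hsub hzero fun x => (hlen x).1⟩
end

section
/- Let w ∈ G(m, p, n). If ℓ_R(w) > codimfix(w), then there exists a reflection t of G(m, p, n) such that t ≤_{ℓ_R} w but t is not ≤_{cdf} w, i.e., t belongs to [id, w]_{ℓ_R} but not to [id, w]_{cdf}. -/
open Equiv Finset
@[ext]
structure GW (m n : ℕ) where
  perm : Equiv.Perm (Fin n)
  wt : Fin n → ZMod m
namespace GW
variable {m n : ℕ}
instance : Mul (GW m n) :=
  ⟨fun x y => ⟨x.perm * y.perm, fun i => x.wt i + y.wt (x.perm⁻¹ i)⟩⟩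
instance : One (GW m n) := ⟨⟨1, 0⟩⟩
instance : Inv (GW m n) := ⟨fun x => ⟨x.perm⁻¹, fun i => -x.wt (x.perm i)⟩⟩
@[simp] theorem mul_perm (x y : GW m n) : (x * y).perm = x.perm * y.perm := rfl
@[simp] theorem mul_wt (x y : GW m n) (i : Fin n) :
    (x * y).wt i = x.wt i + y.wt (x.perm⁻¹ i) := rfl
@[simp] theorem one_perm : (1 : GW m n).perm = 1 := rfl
@[simp] theorem one_wt (i : Fin n) : (1 : GW m n).wt i = 0 := rfl
@[simp] theorem inv_perm (x : GW m n) : (x⁻¹).perm = x.perm⁻¹ := rfl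
@[simp] theorem inv_wt (x : GW m n) (i : Fin n) : (x⁻¹).wt i = -x.wt (x.perm i) := rfl
private theorem gw_mul_assoc (a b c : GW m n) : a * b * c = a * (b * c) := by
  ext i
  · simp [mul_assoc]
  · simp [mul_inv_rev, add_assoc]
private theorem gw_one_mul (a : GW m n) : 1 * a = a := by ext i <;> simp
private theorem gw_mul_one (a : GW m n) : a * 1 = a := by ext i <;> simp
private theorem gw_inv_mul_cancel (a : GW m n) : a⁻¹ * a = 1 := by ext i <;> simp
instance : Group (GW m n) where
  mul := (· * ·)
  one := 1
  inv := Inv.inv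
  mul_assoc := gw_mul_assoc
  one_mul := gw_one_mul
  mul_one := gw_mul_one
  inv_mul_cancel := gw_inv_mul_cancel
def cycleOf (w : GW m n) (i : Fin n) : Finset (Fin n) :=
  Finset.univ.filter fun j => w.perm.SameCycle i j
def cycles (w : GW m n) : Finset (Finset (Fin n)) :=
  Finset.univ.image fun i => w.cycleOf i
def cycWt (w : GW m n) (C : Finset (Fin n)) : ZMod m := ∑ i ∈ C, w.wt i
def numCycles (w : GW m n) : ℕ := (cycles w).card
def c0 (w : GW m n) : ℕ := ((cycles w).filter fun C => cycWt w C = 0).card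
def codimfix (w : GW m n) : ℕ := n - c0 w
def wtTot (w : GW m n) : ZMod m := ∑ i, w.wt i

-- NEW PIECES BELOW --

/-- The base relation on cycles of `w` induced by `u`: two cycles of `w` are related if
some cycle of `u` meets both of them. -/
def piRelBase (u w : GW m n) (C₁ C₂ : Finset (Fin n)) : Prop :=
  C₁ ∈ cycles w ∧ C₂ ∈ cycles w ∧ ∃ D ∈ cycles u, (D ∩ C₁).Nonempty ∧ (D ∩ C₂).Nonempty

/-- The equivalence relation on the cycles of `w` generated by `piRelBase`. -/
def piRel (u w : GW m n) : Finset (Fin n) → Finset (Fin n) → Prop :=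
  Relation.EqvGen (piRelBase u w)

open Classical in
/-- The part of the partition `Π_u(w)` containing the cycle `C` of `w`. -/
noncomputable def piPart (u w : GW m n) (C : Finset (Fin n)) : Finset (Finset (Fin n)) :=
  (cycles w).filter fun C' => piRel u w C C'

/-- The set partition `Π_u(w)` of the cycles of `w`, as the set of its parts. -/
noncomputable def piParts (u w : GW m n) : Finset (Finset (Finset (Fin n))) :=
  (cycles w).image fun C => piPart u w C

/-- The weight of a collection `B` of cycles: the sum of the weights of its cycles. -/
def partWt (w : GW m n) (B : Finset (Finset (Fin n))) : ZMod m :=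
  ∑ C ∈ B, cycWt w C

open Classical in
/-- The number of parts of `Π_u(w)` of nonzero total weight. -/
noncomputable def piPartsNonzeroWt (u w : GW m n) : ℕ :=
  ((piParts u w).filter fun B => partWt w B ≠ 0).card

/-- The support of a collection of cycles: the union of the cycles' underlying sets. -/
def supp (B : Finset (Finset (Fin n))) : Finset (Fin n) := B.sup id

/-- Restriction of a permutation to an invariant set `A` (junk value `1` if `A` is
not invariant): it agrees with `σ` on `A` and is the identity off `A`. -/
noncomputable def restrictPerm (σ : Equiv.Perm (Fin n)) (A : Finset (Fin n)) :
    Equiv.Perm (Fin n) :=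
  if h : ∀ i, σ i ∈ A ↔ i ∈ A then
    { toFun := fun i => if i ∈ A then σ i else i
      invFun := fun i => if i ∈ A then σ.symm i else i
      left_inv := by
        intro i
        by_cases hi : i ∈ A
        · simp [hi, (h i).mpr hi]
        · simp [hi]
      right_inv := by
        intro j
        by_cases hj : j ∈ A
        · have hs : σ.symm j ∈ A := by
            have h2 := h (σ.symm j)
            rw [Equiv.apply_symm_apply] at h2
            exact h2.mp hj
          simp [hj, hs]
        · simp [hj] }
  else 1


/-- The restriction `x|_A` of `x` to a subset `A` of `{1,…,n}` (stabilized by `x`):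
it agrees with `x` on `A` and acts as the identity, with weight `0`, off `A`. -/
noncomputable def restrict (x : GW m n) (A : Finset (Fin n)) : GW m n :=
  ⟨restrictPerm x.perm A, fun i => if i ∈ A then x.wt i else 0⟩

/-- The cycles of `x` contained in `A`; for `x = y|_A` this gives the cycles of the
restriction of `y` to `A`, viewed as an element of `G(m,1,#A)`. -/
def cyclesIn (x : GW m n) (A : Finset (Fin n)) : Finset (Finset (Fin n)) :=
  (cycles x).filter fun C => C ⊆ A

/-- The monomial matrix representing `w`: the nonzero entry in column `j` sits in row
`w.perm j` and equals `ζ^(a_(w.perm j))`, where `ζ = exp(2πi/m)`. -/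
noncomputable def toMatrix (w : GW m n) : Matrix (Fin n) (Fin n) ℂ :=
  Matrix.of fun i j =>
    if w.perm j = i then Complex.exp (2 * Real.pi * Complex.I * ((w.wt i).val : ℂ) / (m : ℂ))
    else 0

/-- `S` (a set of cycles of `w`) can be partitioned into singletons whose weight is
`0 (mod p)` and pairs of cycles whose weights sum to `0` in `ℤ/mℤ`; encoded by an
involution pairing up the cycles. -/
def PairedUp (p : ℕ) (hpm : p ∣ m) (w : GW m n) (S : Finset (Finset (Fin n))) : Prop :=
  ∃ π : {C // C ∈ S} → {C // C ∈ S}, Function.Involutive π ∧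
    (∀ C, π C = C → ZMod.castHom hpm (ZMod p) (cycWt w C.1) = 0) ∧
    (∀ C, π C ≠ C → cycWt w C.1 + cycWt w (π C).1 = 0)

/-- Membership in `G(m,p,n)`: the total weight is `0 (mod p)`. -/
def Gmem (p : ℕ) (hpm : p ∣ m) (w : GW m n) : Prop :=
  ZMod.castHom hpm (ZMod p) (wtTot w) = 0

/-- A reflection of `G(m,p,n)`: an element of the group whose fixed space has codimension 1. -/
def IsRefl (p : ℕ) (hpm : p ∣ m) (t : GW m n) : Prop :=
  Gmem p hpm t ∧ codimfix t = 1

/-- The reflection length of `w` with respect to the reflections of `G(m,p,n)`. -/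
noncomputable def lR (p : ℕ) (hpm : p ∣ m) (w : GW m n) : ℕ :=
  sInf {k | ∃ l : List (GW m n), (∀ t ∈ l, IsRefl p hpm t) ∧ l.length = k ∧ l.prod = w}

/-- The order `≤_f` determined by a subadditive function `f`. -/
def leF (f : GW m n → ℕ) (x y : GW m n) : Prop := f x + f (x⁻¹ * y) = f y

/-- The interval `[id, w]_f` inside the poset `(G(m,p,n), ≤_f)`. -/
def interval (p : ℕ) (hpm : p ∣ m) (f : GW m n → ℕ) (w : GW m n) : Set (GW m n) :=
  {u | Gmem p hpm u ∧ leF f u w}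

/-- A vector `v ∈ ℂⁿ` is regular for `G(m,p,n)` if it is fixed by no reflection. -/
def IsRegularVec (p : ℕ) (hpm : p ∣ m) (v : Fin n → ℂ) : Prop :=
  ∀ t : GW m n, IsRefl p hpm t → (toMatrix t).mulVec v ≠ v

/-- An element `w ∈ G(m,p,n)` is regular if it has an eigenvector that is a regular vector. -/
def IsRegularElt (p : ℕ) (hpm : p ∣ m) (w : GW m n) : Prop :=
  ∃ v : Fin n → ℂ, v ≠ 0 ∧ (∃ c : ℂ, (toMatrix w).mulVec v = c • v) ∧ IsRegularVec p hpm v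

end GW

/-!
Everything is governed by the multiset `W` of cycle weights of `w`. Call a partition of `W` into
nonempty blocks with sums in `pℤ/mℤ` admissible, and give a block the value `2` if its sum is `0`
and `1` otherwise. Then `ℓ_R(w) = n + |W| - V`, where `V` is the largest value of an admissible
partition. Indeed, multiplying by a reflection shifts one weight by an element of `pℤ/mℤ`, merges
two weights or splits one, and none of these moves raises `n + |W| - V` by more than one;
conversely, unless `w = 1`, merging two weights of one block, killing a nonzero singleton block by
a diagonal reflection, or splitting off a fixed point of weight `0` lowers it by one.

As `codimfix w = n - #{cycles of weight 0}`, the inequality `ℓ_R(w) > codimfix(w)` forces some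
block of an optimal partition to contain two weights with nonzero sum. The transposition `t`
merging the two corresponding cycles keeps the optimal value, so `ℓ_R(t w) = ℓ_R(w) - 1`, and
creates no cycle of weight `0`, so `codimfix(t w) ≥ codimfix(w)`.
-/

/-! ### Cycles of `swap i j * τ` -/

namespace Equiv.Perm

variable {α : Type*}

section Finite

variable [Finite α]

theorem SameCycle.of_forall_apply {f : Perm α} {r : α → α → Prop} (hrefl : ∀ x, r x x)
    (htrans : ∀ x y z, r x y → r y z → r x z) (hstep : ∀ z, r z (f z)) {x y : α}
    (hxy : f.SameCycle x y) : r x y := by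
  obtain ⟨k, -, rfl⟩ := hxy.exists_pow_eq'
  clear hxy
  induction k with
  | zero => exact hrefl x
  | succ k ih => exact htrans _ _ _ ih (by rw [pow_succ', mul_apply]; exact hstep _)

theorem not_sameCycle_of_pow_succ_apply_self {f : Perm α} {x y : α} {k : ℕ}
    (hk : (f ^ (k + 1)) x = x) (hy : ∀ s ≤ k, (f ^ s) x ≠ y) : ¬f.SameCycle x y := by
  intro h
  obtain ⟨N, -, rfl⟩ := h.exists_pow_eq'
  have hper : Function.IsPeriodicPt f (k + 1) x := by
    rw [Function.IsPeriodicPt, Function.IsFixedPt, ← coe_pow, hk]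
  refine hy (N % (k + 1)) (Nat.lt_succ_iff.1 (Nat.mod_lt _ k.succ_pos)) ?_
  rw [coe_pow, hper.iterate_mod_apply, ← coe_pow]

end Finite

variable [DecidableEq α]

theorem swap_mul_pow_succ_apply {τ : Perm α} {i j : α} {k : ℕ}
    (h : ((swap i j * τ) ^ k) i = (τ ^ k) i) :
    ((swap i j * τ) ^ (k + 1)) i = swap i j ((τ ^ (k + 1)) i) := by
  rw [pow_succ', mul_apply, h, pow_succ', mul_apply, mul_apply]

variable [Finite α]

theorem exists_first_hit (τ : Perm α) (i j : α) :
    ∃ k, ((τ ^ (k + 1)) i = i ∨ (τ ^ (k + 1)) i = j) ∧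
      ∀ s ≤ k, ((swap i j * τ) ^ s) i = (τ ^ s) i ∧ (0 < s → (τ ^ s) i ≠ i ∧ (τ ^ s) i ≠ j) := by
  have hex : ∃ k, (τ ^ (k + 1)) i = i ∨ (τ ^ (k + 1)) i = j :=
    ⟨orderOf τ - 1, Or.inl (by rw [Nat.sub_add_cancel (orderOf_pos τ), pow_orderOf_eq_one]; rfl)⟩
  refine ⟨Nat.find hex, Nat.find_spec hex, fun s hs => ?_⟩
  have hmiss : ∀ s < Nat.find hex, (τ ^ (s + 1)) i ≠ i ∧ (τ ^ (s + 1)) i ≠ j :=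
    fun s hs => not_or.1 (Nat.find_min hex hs)
  induction s with
  | zero => simp
  | succ s ih =>
    refine ⟨?_, fun _ => hmiss s hs⟩
    obtain ⟨h₁, h₂⟩ := hmiss s hs
    rw [pow_succ', mul_apply, (ih (by omega)).1, mul_apply, ← mul_apply τ, ← pow_succ',
      swap_apply_of_ne_of_ne h₁ h₂]

variable {τ : Perm α} {i j : α}

theorem sameCycle_swap_mul_of_not_sameCycle (h : ¬τ.SameCycle i j) :
    (swap i j * τ).SameCycle i j := by
  obtain ⟨k, hk | hk, hwalk⟩ := exists_first_hit τ i j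
  · refine ⟨((k + 1 : ℕ) : ℤ), ?_⟩
    rw [zpow_natCast, swap_mul_pow_succ_apply (hwalk k le_rfl).1, hk, swap_apply_left]
  · exact absurd ⟨((k + 1 : ℕ) : ℤ), by rw [zpow_natCast, hk]⟩ h

theorem not_sameCycle_swap_mul_of_sameCycle (hij : i ≠ j) (h : τ.SameCycle i j) :
    ¬(swap i j * τ).SameCycle i j := by
  obtain ⟨k, hk | hk, hwalk⟩ := exists_first_hit τ i j
  · refine absurd h (not_sameCycle_of_pow_succ_apply_self hk fun s hs => ?_)
    rcases Nat.eq_zero_or_pos s with rfl | hpos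
    · simpa using hij
    · exact ((hwalk s hs).2 hpos).2
  · refine not_sameCycle_of_pow_succ_apply_self (k := k) ?_ fun s hs => ?_
    · rw [swap_mul_pow_succ_apply (hwalk k le_rfl).1, hk, swap_apply_right]
    · rw [(hwalk s hs).1]
      rcases Nat.eq_zero_or_pos s with rfl | hpos
      · simpa using hij
      · exact ((hwalk s hs).2 hpos).2

theorem SameCycle.swap_mul_of_not_sameCycle (h : ¬τ.SameCycle i j) {x y : α}
    (hxy : τ.SameCycle x y) : (swap i j * τ).SameCycle x y := by
  have hij := sameCycle_swap_mul_of_not_sameCycle h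
  refine hxy.of_forall_apply (SameCycle.refl _) (fun _ _ _ => SameCycle.trans) fun z => ?_
  have hz : (swap i j * τ).SameCycle z (swap i j (τ z)) := ⟨1, by simp⟩
  by_cases hi : τ z = i
  · rw [hi, swap_apply_left] at hz
    rw [hi]
    exact hz.trans hij.symm
  by_cases hj : τ z = j
  · rw [hj, swap_apply_right] at hz
    rw [hj]
    exact hz.trans hij
  rwa [swap_apply_of_ne_of_ne hi hj] at hz

theorem SameCycle.of_swap_mul {x y : α} (hxy : (swap i j * τ).SameCycle x y) :
    τ.SameCycle x y ∨
      ((τ.SameCycle i x ∨ τ.SameCycle j x) ∧ (τ.SameCycle i y ∨ τ.SameCycle j y)) := by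
  have hU : ∀ {a b}, τ.SameCycle a b →
      (τ.SameCycle i a ∨ τ.SameCycle j a → τ.SameCycle i b ∨ τ.SameCycle j b) :=
    fun h => Or.imp (·.trans h) (·.trans h)
  refine SameCycle.of_forall_apply
    (r := fun x y => τ.SameCycle x y ∨
      ((τ.SameCycle i x ∨ τ.SameCycle j x) ∧ (τ.SameCycle i y ∨ τ.SameCycle j y)))
    (fun x => Or.inl (SameCycle.refl _ x)) ?_ (fun z => ?_) hxy
  · rintro a b c (hab | ⟨ha, hb⟩) (hbc | ⟨hb', hc⟩)
    · exact Or.inl (hab.trans hbc)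
    · exact Or.inr ⟨hU hab.symm hb', hc⟩
    · exact Or.inr ⟨ha, hU hbc hb⟩
    · exact Or.inr ⟨ha, hc⟩
  have hz : τ.SameCycle z (τ z) := ⟨1, by simp⟩
  rw [mul_apply]
  by_cases hi : τ z = i
  · rw [hi, swap_apply_left]
    exact Or.inr ⟨Or.inl (hi ▸ hz).symm, Or.inr (SameCycle.refl _ _)⟩
  by_cases hj : τ z = j
  · rw [hj, swap_apply_right]
    exact Or.inr ⟨Or.inr (hj ▸ hz).symm, Or.inl (SameCycle.refl _ _)⟩
  rw [swap_apply_of_ne_of_ne hi hj]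
  exact Or.inl hz

end Equiv.Perm

/-! ### Partitions of a multiset into blocks with sums in a subgroup -/

section BlockPartition

variable {G : Type*} [AddCommGroup G] {H : AddSubgroup G}

def IsBlockPartition (H : AddSubgroup G) (W : Multiset G) (P : Multiset (Multiset G)) : Prop :=
  P.sum = W ∧ ∀ B ∈ P, B ≠ 0 ∧ B.sum ∈ H

theorem isBlockPartition_zero : IsBlockPartition H 0 0 := by simp [IsBlockPartition]

theorem isBlockPartition_cons {W B : Multiset G} {P : Multiset (Multiset G)} :
    IsBlockPartition H W (B ::ₘ P) ↔
      W = B + P.sum ∧ B ≠ 0 ∧ B.sum ∈ H ∧ IsBlockPartition H P.sum P := by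
  simp only [IsBlockPartition, Multiset.sum_cons, Multiset.forall_mem_cons, true_and]
  exact ⟨fun ⟨h, hB, hP⟩ => ⟨h.symm, hB.1, hB.2, hP⟩,
    fun ⟨h, hB, hBH, hP⟩ => ⟨h.symm, ⟨hB, hBH⟩, hP⟩⟩

theorem IsBlockPartition.add {W₁ W₂ : Multiset G} {P₁ P₂ : Multiset (Multiset G)}
    (h₁ : IsBlockPartition H W₁ P₁) (h₂ : IsBlockPartition H W₂ P₂) :
    IsBlockPartition H (W₁ + W₂) (P₁ + P₂) :=
  ⟨by rw [Multiset.sum_add, h₁.1, h₂.1], fun B hB => (Multiset.mem_add.1 hB).elim (h₁.2 B) (h₂.2 B)⟩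

theorem isBlockPartition_replicate_zero (k : ℕ) :
    IsBlockPartition H (Multiset.replicate k 0) (Multiset.replicate k {0}) := by
  refine ⟨?_, fun B hB => by simp [Multiset.eq_of_mem_replicate hB]⟩
  induction k with
  | zero => rfl
  | succ k ih => rw [Multiset.replicate_succ, Multiset.replicate_succ, Multiset.sum_cons, ih]; rfl

theorem exists_isBlockPartition {W : Multiset G} (hW : W.sum ∈ H) :
    ∃ P, IsBlockPartition H W P := by
  rcases eq_or_ne W 0 with rfl | hW0
  · exact ⟨0, isBlockPartition_zero⟩
  · exact ⟨{W}, by simp [IsBlockPartition, hW0, hW]⟩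

theorem IsBlockPartition.exists_eq_cons {a : G} {W : Multiset G} {P : Multiset (Multiset G)}
    (hP : IsBlockPartition H W P) (ha : a ∈ W) : ∃ B P₀, P = (a ::ₘ B) ::ₘ P₀ := by
  obtain ⟨B, hB, haB⟩ := Multiset.mem_join.1 (hP.1 ▸ ha)
  obtain ⟨P₀, rfl⟩ := Multiset.exists_cons_of_mem hB
  obtain ⟨B, rfl⟩ := Multiset.exists_cons_of_mem haB
  exact ⟨B, P₀, rfl⟩

theorem IsBlockPartition.eq_cons_cons_or_eq_singleton_cons {a : G} {W : Multiset G}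
    {P : Multiset (Multiset G)} (hP : IsBlockPartition H W P) (ha : a ∈ W) :
    (∃ b B P₀, P = (a ::ₘ b ::ₘ B) ::ₘ P₀) ∨ ∃ P₀, P = {a} ::ₘ P₀ := by
  obtain ⟨B, P₀, rfl⟩ := hP.exists_eq_cons ha
  rcases Multiset.empty_or_exists_mem B with rfl | ⟨b, hb⟩
  · exact Or.inr ⟨P₀, rfl⟩
  · obtain ⟨B, rfl⟩ := Multiset.exists_cons_of_mem hb
    exact Or.inl ⟨b, B, P₀, rfl⟩

variable [DecidableEq G]

def blockValue (B : Multiset G) : ℕ := if B.sum = 0 then 2 else 1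

def partitionValue (P : Multiset (Multiset G)) : ℕ := (P.map blockValue).sum

@[simp] theorem partitionValue_zero : partitionValue (0 : Multiset (Multiset G)) = 0 := rfl

@[simp] theorem partitionValue_cons (B : Multiset G) (P : Multiset (Multiset G)) :
    partitionValue (B ::ₘ P) = blockValue B + partitionValue P := by
  simp [partitionValue]

theorem partitionValue_add (P Q : Multiset (Multiset G)) :
    partitionValue (P + Q) = partitionValue P + partitionValue Q := by
  simp [partitionValue]

theorem one_le_blockValue (B : Multiset G) : 1 ≤ blockValue B := by
  unfold blockValue; split_ifs <;> omega

theorem blockValue_le_two (B : Multiset G) : blockValue B ≤ 2 := by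
  unfold blockValue; split_ifs <;> omega

theorem blockValue_congr {B B' : Multiset G} (h : B.sum = B'.sum) :
    blockValue B = blockValue B' := by
  rw [blockValue, blockValue, h]

theorem blockValue_add_le (B₁ B₂ : Multiset G) :
    blockValue B₁ + blockValue B₂ ≤ blockValue (B₁ + B₂) + 2 := by
  have := one_le_blockValue (B₁ + B₂)
  unfold blockValue at *
  rw [Multiset.sum_add]
  split_ifs with h₁ h₂ h₁₂ <;> simp_all

theorem partitionValue_replicate_zero (k : ℕ) :
    partitionValue (Multiset.replicate k ({0} : Multiset G)) = 2 * k := by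
  simp [partitionValue, blockValue, mul_comm]

theorem blockValue_le_card_add_count {B : Multiset G} (hB : B ≠ 0) :
    blockValue B ≤ Multiset.card B + B.count 0 := by
  obtain ⟨a, B, rfl⟩ : ∃ a B', B = a ::ₘ B' := by
    obtain ⟨a, ha⟩ := Multiset.exists_mem_of_ne_zero hB
    exact ⟨a, _, (Multiset.cons_erase ha).symm⟩
  rcases eq_or_ne B 0 with rfl | hB'
  · by_cases ha : a = 0 <;> simp [blockValue, ha]
  · have := Multiset.card_pos.2 hB'
    have := blockValue_le_two (a ::ₘ B)
    simp only [Multiset.card_cons]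
    omega

theorem IsBlockPartition.partitionValue_le {W : Multiset G} {P : Multiset (Multiset G)}
    (hP : IsBlockPartition H W P) : partitionValue P ≤ Multiset.card W + W.count 0 := by
  induction P using Multiset.induction_on generalizing W with
  | empty => simp
  | cons B P ih =>
    obtain ⟨rfl, hB, -, hP⟩ := isBlockPartition_cons.1 hP
    have := blockValue_le_card_add_count hB
    have := ih hP
    simp only [partitionValue_cons, Multiset.card_add, Multiset.count_add]
    omega

/-- The ways in which one reflection can change the multiset of cycle weights. -/
inductive WeightMove (H : AddSubgroup G) : Multiset G → Multiset G → Prop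
  | shift (a d : G) (M : Multiset G) : d ∈ H → WeightMove H (a ::ₘ M) ((a + d) ::ₘ M)
  | merge (a b : G) (M : Multiset G) : WeightMove H (a ::ₘ b ::ₘ M) ((a + b) ::ₘ M)
  | split (a b : G) (M : Multiset G) : WeightMove H ((a + b) ::ₘ M) (a ::ₘ b ::ₘ M)

theorem IsBlockPartition.merge_of_eq_cons {a b : G} {B W : Multiset G}
    {P₀ : Multiset (Multiset G)} (hP : IsBlockPartition H W ((a ::ₘ b ::ₘ B) ::ₘ P₀)) :
    IsBlockPartition H ((a + b) ::ₘ (B + P₀.sum)) (((a + b) ::ₘ B) ::ₘ P₀) ∧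
      partitionValue (((a + b) ::ₘ B) ::ₘ P₀) = partitionValue ((a ::ₘ b ::ₘ B) ::ₘ P₀) := by
  have hsum : ((a + b) ::ₘ B).sum = (a ::ₘ b ::ₘ B).sum := by simp [add_assoc]
  obtain ⟨-, -, hBH, hP₀⟩ := isBlockPartition_cons.1 hP
  exact ⟨isBlockPartition_cons.2 ⟨by simp, by simp, hsum ▸ hBH, hP₀⟩,
    by simp [blockValue_congr hsum]⟩

theorem IsBlockPartition.exists_of_shift {a d : G} {M : Multiset G} {P : Multiset (Multiset G)}
    (hP : IsBlockPartition H (a ::ₘ M) P) (hd : d ∈ H) :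
    ∃ P', IsBlockPartition H ((a + d) ::ₘ M) P' ∧ partitionValue P ≤ partitionValue P' + 1 := by
  obtain ⟨B, P₀, rfl⟩ := hP.exists_eq_cons (Multiset.mem_cons_self a M)
  obtain ⟨hW, -, hBH, hP₀⟩ := isBlockPartition_cons.1 hP
  rw [Multiset.cons_add, Multiset.cons_inj_right] at hW
  subst hW
  refine ⟨((a + d) ::ₘ B) ::ₘ P₀, isBlockPartition_cons.2 ⟨by simp, by simp, ?_, hP₀⟩, ?_⟩
  · rw [Multiset.sum_cons, add_right_comm, ← Multiset.sum_cons]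
    exact add_mem hBH hd
  · have := blockValue_le_two (a ::ₘ B)
    have := one_le_blockValue ((a + d) ::ₘ B)
    simp only [partitionValue_cons]
    omega

theorem IsBlockPartition.exists_of_merge {a b : G} {M : Multiset G} {P : Multiset (Multiset G)}
    (hP : IsBlockPartition H (a ::ₘ b ::ₘ M) P) :
    ∃ P', IsBlockPartition H ((a + b) ::ₘ M) P' ∧ partitionValue P ≤ partitionValue P' + 2 := by
  obtain ⟨B, P₀, rfl⟩ := hP.exists_eq_cons (Multiset.mem_cons_self a _)
  obtain ⟨hW, -, hBH, hP₀⟩ := isBlockPartition_cons.1 hP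
  rw [Multiset.cons_add, Multiset.cons_inj_right] at hW
  rcases Multiset.mem_add.1 (hW ▸ Multiset.mem_cons_self b M) with hb | hb
  · obtain ⟨B, rfl⟩ := Multiset.exists_cons_of_mem hb
    rw [Multiset.cons_add, Multiset.cons_inj_right] at hW
    obtain ⟨hP', hval⟩ := hP.merge_of_eq_cons
    exact ⟨_, hW ▸ hP', by omega⟩
  obtain ⟨B₂, P₁, rfl⟩ := hP₀.exists_eq_cons hb
  obtain ⟨-, -, hB₂H, hP₁⟩ := isBlockPartition_cons.1 hP₀
  rw [Multiset.sum_cons, Multiset.cons_add, Multiset.add_cons, Multiset.cons_inj_right] at hW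
  have hsum : ((a + b) ::ₘ (B + B₂)).sum = ((a ::ₘ B) + (b ::ₘ B₂)).sum := by
    simp only [Multiset.sum_cons, Multiset.sum_add]
    abel
  refine ⟨((a + b) ::ₘ (B + B₂)) ::ₘ P₁, isBlockPartition_cons.2 ⟨?_, by simp, ?_, hP₁⟩, ?_⟩
  · rw [hW, Multiset.cons_add, add_assoc]
  · rw [hsum, Multiset.sum_add]
    exact add_mem hBH hB₂H
  · have := blockValue_add_le (a ::ₘ B) (b ::ₘ B₂)
    simp only [partitionValue_cons, blockValue_congr hsum]
    omega

theorem IsBlockPartition.exists_of_split {a b : G} {M : Multiset G} {P : Multiset (Multiset G)}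
    (hP : IsBlockPartition H ((a + b) ::ₘ M) P) :
    ∃ P', IsBlockPartition H (a ::ₘ b ::ₘ M) P' ∧ partitionValue P ≤ partitionValue P' := by
  obtain ⟨B, P₀, rfl⟩ := hP.exists_eq_cons (Multiset.mem_cons_self _ M)
  obtain ⟨hW, -, hBH, hP₀⟩ := isBlockPartition_cons.1 hP
  rw [Multiset.cons_add, Multiset.cons_inj_right] at hW
  subst hW
  have hsum : (a ::ₘ b ::ₘ B).sum = ((a + b) ::ₘ B).sum := by simp [add_assoc]
  refine ⟨(a ::ₘ b ::ₘ B) ::ₘ P₀, isBlockPartition_cons.2 ⟨by simp, by simp, hsum ▸ hBH, hP₀⟩, ?_⟩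
  simp [blockValue_congr hsum]

theorem WeightMove.exists_isBlockPartition {W W' : Multiset G} (h : WeightMove H W W')
    {P : Multiset (Multiset G)} (hP : IsBlockPartition H W P) :
    ∃ P', IsBlockPartition H W' P' ∧
      Multiset.card W' + partitionValue P ≤ Multiset.card W + partitionValue P' + 1 := by
  cases h with
  | shift a d M hd =>
    obtain ⟨P', hP', hle⟩ := hP.exists_of_shift hd
    exact ⟨P', hP', by simp only [Multiset.card_cons]; omega⟩
  | merge a b M =>
    obtain ⟨P', hP', hle⟩ := hP.exists_of_merge
    exact ⟨P', hP', by simp only [Multiset.card_cons]; omega⟩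
  | split a b M =>
    obtain ⟨P', hP', hle⟩ := hP.exists_of_split
    exact ⟨P', hP', by simp only [Multiset.card_cons]; omega⟩

/-- Otherwise the block is `{0, 0}`, or it has a zero-sum pair and at least three elements, and
splitting off that pair raises the value. -/
theorem card_add_count_le_blockValue {B : Multiset G} (hB : B ≠ 0) (hBH : B.sum ∈ H)
    (hopt : ∀ Q, IsBlockPartition H B Q → partitionValue Q ≤ blockValue B)
    (hpair : ∀ a b B', B = a ::ₘ b ::ₘ B' → a + b = 0) :
    Multiset.card B + B.count 0 ≤ blockValue B := by
  obtain ⟨a, B, rfl⟩ : ∃ a B', B = a ::ₘ B' := by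
    obtain ⟨a, ha⟩ := Multiset.exists_mem_of_ne_zero hB
    exact ⟨a, _, (Multiset.cons_erase ha).symm⟩
  rcases eq_or_ne B 0 with rfl | hB₁
  · rcases eq_or_ne a 0 with rfl | ha
    · simp [blockValue]
    · simp [blockValue, ha, ha.symm]
  obtain ⟨b, B, rfl⟩ : ∃ b B', B = b ::ₘ B' := by
    obtain ⟨b, hb⟩ := Multiset.exists_mem_of_ne_zero hB₁
    exact ⟨b, _, (Multiset.cons_erase hb).symm⟩
  have hab := hpair a b B rfl
  have hBsum : (a ::ₘ b ::ₘ B).sum = B.sum := by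
    rw [Multiset.sum_cons, Multiset.sum_cons, ← add_assoc, hab, zero_add]
  rcases eq_or_ne B 0 with rfl | hB₂
  · rcases eq_or_ne a 0 with rfl | ha
    · rw [zero_add] at hab
      subst hab
      have := hopt {{0}, {0}} ⟨rfl, by simp⟩
      simp [partitionValue, blockValue] at this
    · have hb : b ≠ 0 := fun hb => ha (by simpa [hb] using hab)
      simp [blockValue, hab, ha.symm, hb.symm]
  · have hBH' : B.sum ∈ H := hBsum ▸ hBH
    have hQ := hopt {{a, b}, B} ⟨by simp, by simp [hB₂, hBH', hab]⟩
    have h₂ : blockValue ({a, b} : Multiset G) = 2 := by simp [blockValue, hab]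
    have := blockValue_le_two B
    change partitionValue ({a, b} ::ₘ B ::ₘ 0) ≤ _ at hQ
    simp only [partitionValue_cons, partitionValue_zero, h₂, blockValue_congr hBsum] at hQ
    omega

theorem IsBlockPartition.card_add_count_le_partitionValue {W : Multiset G}
    {P : Multiset (Multiset G)} (hP : IsBlockPartition H W P)
    (hopt : ∀ P', IsBlockPartition H W P' → partitionValue P' ≤ partitionValue P)
    (hpair : ∀ B ∈ P, ∀ a b B', B = a ::ₘ b ::ₘ B' → a + b = 0) :
    Multiset.card W + W.count 0 ≤ partitionValue P := by
  induction P using Multiset.induction_on generalizing W with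
  | empty => simp [← hP.1]
  | cons B P ih =>
    obtain ⟨rfl, hB0, hBH, hP₀⟩ := isBlockPartition_cons.1 hP
    have hB := card_add_count_le_blockValue hB0 hBH
      (fun Q hQ => by
        have := hopt (Q + P) (hQ.add hP₀)
        rw [partitionValue_add, partitionValue_cons] at this
        omega)
      (hpair B (Multiset.mem_cons_self B P))
    have hP₀ := ih hP₀
      (fun P' hP' => by
        have := hopt (B ::ₘ P')
          (isBlockPartition_cons.2 ⟨by rw [hP'.1], hB0, hBH, hP'.1.symm ▸ hP'⟩)
        rw [partitionValue_cons, partitionValue_cons] at this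
        omega)
      (fun B' hB' => hpair B' (Multiset.mem_cons_of_mem hB'))
    simp only [Multiset.card_add, Multiset.count_add, partitionValue_cons]
    omega

end BlockPartition

/-! ### Cycles and cycle weights -/

namespace GW

open Equiv.Perm

variable {m n : ℕ}

theorem mem_cycleOf {w : GW m n} {i j : Fin n} : j ∈ w.cycleOf i ↔ w.perm.SameCycle i j := by
  simp [cycleOf]

theorem self_mem_cycleOf (w : GW m n) (i : Fin n) : i ∈ w.cycleOf i :=
  mem_cycleOf.2 (SameCycle.refl _ _)

theorem cycleOf_eq_cycleOf {w : GW m n} {i j : Fin n} (h : w.perm.SameCycle i j) :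
    w.cycleOf i = w.cycleOf j := by
  ext x
  simp only [mem_cycleOf]
  exact ⟨h.symm.trans, h.trans⟩

theorem cycleOf_mem_cycles (w : GW m n) (i : Fin n) : w.cycleOf i ∈ cycles w :=
  mem_image_of_mem _ (mem_univ i)

theorem mem_cycles {w : GW m n} {C : Finset (Fin n)} : C ∈ cycles w ↔ ∃ i, w.cycleOf i = C := by
  simp [cycles]

theorem cycleOf_eq_of_mem_cycles {w : GW m n} {C : Finset (Fin n)} (hC : C ∈ cycles w)
    {i : Fin n} (hi : i ∈ C) : w.cycleOf i = C := by
  obtain ⟨k, rfl⟩ := mem_cycles.1 hC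
  exact cycleOf_eq_cycleOf (mem_cycleOf.1 hi).symm

theorem cycleOf_eq_singleton {w : GW m n} {v : Fin n} (h : w.perm v = v) : w.cycleOf v = {v} := by
  ext x
  rw [mem_cycleOf, mem_singleton]
  exact ⟨fun hx => (hx.eq_of_left h).symm, fun hx => hx ▸ SameCycle.refl _ _⟩

theorem cycWt_singleton (w : GW m n) (v : Fin n) : cycWt w {v} = w.wt v := sum_singleton _ _

theorem cycWt_mul {x y : GW m n} {E : Finset (Fin n)} (hE : ∀ i, x.perm i ∈ E ↔ i ∈ E) :
    cycWt (x * y) E = cycWt x E + cycWt y E := by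
  simp only [cycWt, mul_wt, sum_add_distrib, add_right_inj]
  exact sum_equiv x.perm⁻¹ (fun i => by simpa using hE (x.perm⁻¹ i)) fun _ _ => rfl

def cycleWeights (w : GW m n) : Multiset (ZMod m) := (cycles w).val.map (cycWt w)

theorem count_zero_cycleWeights (w : GW m n) : (cycleWeights w).count 0 = c0 w := by
  rw [cycleWeights, Multiset.count_map, c0, card_def, filter_val]
  exact congrArg _ (Multiset.filter_congr fun _ _ => eq_comm)

theorem codimfix_eq (w : GW m n) : codimfix w = n - (cycleWeights w).count 0 := by
  rw [codimfix, count_zero_cycleWeights]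

theorem card_cycleWeights_le (w : GW m n) : Multiset.card (cycleWeights w) ≤ n := by
  rw [cycleWeights, Multiset.card_map, ← card_def]
  exact card_image_le.trans (by simp)

theorem count_zero_cycleWeights_le (w : GW m n) : (cycleWeights w).count 0 ≤ n :=
  (Multiset.count_le_card _ _).trans (card_cycleWeights_le w)

theorem sum_cycleWeights (w : GW m n) : (cycleWeights w).sum = wtTot w := by
  rw [cycleWeights, ← sum_eq_multiset_sum, cycles, wtTot]
  refine sum_image' _ fun i _ => ?_
  congr 1
  ext j
  simp only [mem_filter, mem_univ, true_and]
  exact ⟨fun h => (cycleOf_eq_cycleOf (mem_cycleOf.1 h)).symm, fun h => h ▸ self_mem_cycleOf w j⟩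

theorem cycWt_one (C : Finset (Fin n)) : cycWt (1 : GW m n) C = 0 := sum_eq_zero fun _ _ => rfl

theorem cycleWeights_one : cycleWeights (1 : GW m n) = Multiset.replicate n 0 := by
  have hsingle : ∀ i : Fin n, (1 : GW m n).cycleOf i = {i} := fun i => cycleOf_eq_singleton rfl
  refine Multiset.eq_replicate.2 ⟨?_, fun a ha => ?_⟩
  · rw [cycleWeights, Multiset.card_map, ← card_def, cycles, card_image_of_injective]
    · simp
    · exact fun i j h => singleton_injective (by simpa only [hsingle] using h)
  · obtain ⟨C, -, rfl⟩ := Multiset.mem_map.1 ha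
    exact cycWt_one C

/-! ### The reflections `mkTrans` and `mkDiag` and their effect on cycle weights -/

def mkTrans (i j : Fin n) (c : ZMod m) : GW m n :=
  ⟨swap i j, Pi.single i c + Pi.single j (-c)⟩

def mkDiag (v : Fin n) (d : ZMod m) : GW m n :=
  ⟨1, Pi.single v d⟩

theorem mkTrans_mul_self {i j : Fin n} (hij : i ≠ j) (c : ZMod m) :
    mkTrans i j c * mkTrans i j c = 1 := by
  ext x
  · simp [mkTrans]
  · simp only [mkTrans, mul_wt, swap_inv, Pi.add_apply, one_wt]
    rcases eq_or_ne x i with rfl | hi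
    · simp [hij]
    rcases eq_or_ne x j with rfl | hj
    · simp [hi]
    simp [swap_apply_of_ne_of_ne hi hj, hi, hj]

theorem mkTrans_inv {i j : Fin n} (hij : i ≠ j) (c : ZMod m) : (mkTrans i j c)⁻¹ = mkTrans i j c :=
  inv_eq_of_mul_eq_one_right (mkTrans_mul_self hij c)

theorem mkDiag_mul_mkDiag_neg (v : Fin n) (d : ZMod m) : mkDiag v d * mkDiag v (-d) = 1 := by
  ext x
  · simp [mkDiag]
  · rw [mul_wt, one_wt, mkDiag, mkDiag, inv_one, Equiv.Perm.one_apply, ← Pi.add_apply,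
      ← Pi.single_add, add_neg_cancel, Pi.single_zero, Pi.zero_apply]

theorem cycWt_mkTrans {i j : Fin n} (c : ZMod m) {E : Finset (Fin n)} (hE : i ∈ E ↔ j ∈ E) :
    cycWt (mkTrans i j c) E = 0 := by
  by_cases hi : i ∈ E <;> simp [cycWt, mkTrans, sum_add_distrib, hi, ← hE]

theorem cycWt_mkDiag (v : Fin n) (d : ZMod m) (E : Finset (Fin n)) :
    cycWt (mkDiag v d) E = if v ∈ E then d else 0 := by
  simp [cycWt, mkDiag]

theorem cycWt_mkTrans_mul {i j : Fin n} (c : ZMod m) (y : GW m n) {E : Finset (Fin n)}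
    (hE : i ∈ E ↔ j ∈ E) : cycWt (mkTrans i j c * y) E = cycWt y E := by
  rw [cycWt_mul, cycWt_mkTrans c hE, zero_add]
  intro k
  simp only [mkTrans]
  rcases eq_or_ne k i with rfl | hi
  · rw [swap_apply_left]; exact hE.symm
  rcases eq_or_ne k j with rfl | hj
  · rw [swap_apply_right]; exact hE
  rw [swap_apply_of_ne_of_ne hi hj]

theorem wtTot_mkTrans (i j : Fin n) (c : ZMod m) : wtTot (mkTrans i j c) = 0 :=
  cycWt_mkTrans c (by simp)

theorem wtTot_mkDiag (v : Fin n) (d : ZMod m) : wtTot (mkDiag v d) = d := by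
  simp [wtTot, mkDiag]

theorem notMem_of_mem_cycles_of_ne {w : GW m n} {E : Finset (Fin n)} (hE : E ∈ cycles w)
    {v : Fin n} (hne : E ≠ w.cycleOf v) : v ∉ E :=
  fun hv => hne (cycleOf_eq_of_mem_cycles hE hv).symm

theorem cycleWeights_mkDiag_mul (y : GW m n) (v : Fin n) (d : ZMod m) :
    ∃ M, cycleWeights y = cycWt y (y.cycleOf v) ::ₘ M ∧
      cycleWeights (mkDiag v d * y) = (cycWt y (y.cycleOf v) + d) ::ₘ M := by
  have hcycles : cycles (mkDiag v d * y) = cycles y := by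
    simp [cycles, cycleOf, mkDiag]
  have hwt : ∀ E, cycWt (mkDiag v d * y) E = cycWt y E + if v ∈ E then d else 0 := fun E => by
    rw [cycWt_mul (by simp [mkDiag]), cycWt_mkDiag, add_comm]
  have hval := (Multiset.cons_erase (mem_def.1 (cycleOf_mem_cycles y v))).symm
  have hR : ∀ E ∈ (cycles y).val.erase (y.cycleOf v), v ∉ E := fun E hE => by
    rw [← erase_val, mem_val, mem_erase] at hE
    obtain ⟨hne, hE⟩ := hE
    exact notMem_of_mem_cycles_of_ne hE hne
  generalize (cycles y).val.erase (y.cycleOf v) = R at hval hR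
  refine ⟨R.map (cycWt y), ?_, ?_⟩
  · rw [cycleWeights, hval, Multiset.map_cons]
  · rw [cycleWeights, hcycles, hval, Multiset.map_cons, hwt, if_pos (self_mem_cycleOf y v)]
    exact congrArg _ (Multiset.map_congr rfl fun E hE => by rw [hwt, if_neg (hR E hE), add_zero])

theorem cycleOf_mkTrans_mul {y : GW m n} {i j : Fin n} (h : ¬y.perm.SameCycle i j) (c : ZMod m)
    (x : Fin n) : (mkTrans i j c * y).cycleOf x =
      if x ∈ y.cycleOf i ∪ y.cycleOf j then y.cycleOf i ∪ y.cycleOf j else y.cycleOf x := by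
  have hperm : (mkTrans i j c * y).perm = swap i j * y.perm := rfl
  have hunion : ∀ a, a ∈ y.cycleOf i ∪ y.cycleOf j ↔ y.perm.SameCycle i a ∨ y.perm.SameCycle j a :=
    fun a => by rw [mem_union, mem_cycleOf, mem_cycleOf]
  have hi : ∀ a ∈ y.cycleOf i ∪ y.cycleOf j, (swap i j * y.perm).SameCycle i a := by
    intro a ha
    rcases (hunion a).1 ha with ha | ha
    · exact ha.swap_mul_of_not_sameCycle h
    · exact (sameCycle_swap_mul_of_not_sameCycle h).trans (ha.swap_mul_of_not_sameCycle h)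
  split_ifs with hx
  · ext u
    rw [mem_cycleOf, hperm]
    refine ⟨fun hu => ?_, fun hu => (hi x hx).symm.trans (hi u hu)⟩
    rcases ((hi x hx).trans hu).of_swap_mul with hiu | ⟨-, hu⟩
    · exact mem_union_left _ (mem_cycleOf.2 hiu)
    · exact (hunion u).2 hu
  · ext u
    rw [mem_cycleOf, mem_cycleOf, hperm]
    refine ⟨fun hu => ?_, fun hu => hu.swap_mul_of_not_sameCycle h⟩
    rcases hu.of_swap_mul with hu | ⟨hx', -⟩
    · exact hu
    · exact absurd ((hunion x).2 hx') hx

theorem cycles_mkTrans_mul {y : GW m n} {i j : Fin n} (h : ¬y.perm.SameCycle i j) (c : ZMod m) :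
    cycles (mkTrans i j c * y) =
      insert (y.cycleOf i ∪ y.cycleOf j)
        (((cycles y).erase (y.cycleOf i)).erase (y.cycleOf j)) := by
  ext F
  simp only [mem_insert, mem_erase, mem_cycles, cycleOf_mkTrans_mul h]
  constructor
  · rintro ⟨x, hx⟩
    split_ifs at hx with hxU
    · exact Or.inl hx.symm
    · subst hx
      exact Or.inr ⟨fun hxj => hxU (mem_union_right _ (hxj ▸ self_mem_cycleOf y x)),
        fun hxi => hxU (mem_union_left _ (hxi ▸ self_mem_cycleOf y x)), x, rfl⟩
  · rintro (rfl | ⟨hFj, hFi, x, rfl⟩)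
    · exact ⟨i, if_pos (mem_union_left _ (self_mem_cycleOf y i))⟩
    · refine ⟨x, if_neg fun hx => ?_⟩
      rcases mem_union.1 hx with hx | hx
      · exact hFi (cycleOf_eq_of_mem_cycles (cycleOf_mem_cycles y i) hx)
      · exact hFj (cycleOf_eq_of_mem_cycles (cycleOf_mem_cycles y j) hx)

theorem cycleWeights_mkTrans_mul {y : GW m n} {i j : Fin n} (h : ¬y.perm.SameCycle i j)
    (c : ZMod m) :
    ∃ M, cycleWeights y = cycWt y (y.cycleOf i) ::ₘ cycWt y (y.cycleOf j) ::ₘ M ∧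
      cycleWeights (mkTrans i j c * y) = (cycWt y (y.cycleOf i) + cycWt y (y.cycleOf j)) ::ₘ M := by
  set C := y.cycleOf i
  set D := y.cycleOf j
  set R := ((cycles y).erase C).erase D
  have hjC : j ∉ C := fun hj => h (mem_cycleOf.1 hj)
  have hDC : D ≠ C := fun hDC => hjC (hDC ▸ self_mem_cycleOf y j)
  have hR : ∀ E ∈ R, E ∈ cycles y ∧ i ∉ E ∧ j ∉ E := fun E hE => by
    simp only [R, mem_erase] at hE
    obtain ⟨hED, hEC, hE⟩ := hE
    exact ⟨hE, notMem_of_mem_cycles_of_ne hE hEC, notMem_of_mem_cycles_of_ne hE hED⟩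
  have hCD_notMem : C ∪ D ∉ R := fun hCD => (hR _ hCD).2.1 (mem_union_left _ (self_mem_cycleOf y i))
  have hcycles : (cycles y).val = C ::ₘ D ::ₘ R.val := by
    rw [← insert_val_of_notMem (by simp [R]), ← insert_val_of_notMem (by simp [R, hDC.symm]),
      insert_erase (mem_erase.2 ⟨hDC, cycleOf_mem_cycles y j⟩),
      insert_erase (cycleOf_mem_cycles y i)]
  refine ⟨R.val.map (cycWt y), ?_, ?_⟩
  · rw [cycleWeights, hcycles, Multiset.map_cons, Multiset.map_cons]
  · rw [cycleWeights, cycles_mkTrans_mul h, insert_val_of_notMem hCD_notMem, Multiset.map_cons,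
      cycWt_mkTrans_mul c y (by simp [C, D, self_mem_cycleOf]),
      cycWt, sum_union (disjoint_left.2 fun a haC haD => ?_)]
    · exact congrArg _ (Multiset.map_congr rfl fun E hE =>
        cycWt_mkTrans_mul c y (iff_of_false (hR E hE).2.1 (hR E hE).2.2))
    · exact h ((mem_cycleOf.1 haC).trans (mem_cycleOf.1 haD).symm)

theorem cycleWeights_mkTrans_mul_of_apply_ne {w : GW m n} {v : Fin n} (hv : w.perm v ≠ v) :
    cycleWeights (mkTrans v (w.perm v) (-w.wt (w.perm v)) * w) = 0 ::ₘ cycleWeights w := by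
  set s := mkTrans v (w.perm v) (-w.wt (w.perm v))
  have hsv : (s * w).perm v = v := by simp [s, mkTrans]
  have hwt : (s * w).wt v = 0 := by simp [s, mkTrans, hv.symm]
  obtain ⟨M, h₁, h₂⟩ :=
    cycleWeights_mkTrans_mul (fun h => hv (h.eq_of_left hsv).symm) (-w.wt (w.perm v))
  rw [← mul_assoc, mkTrans_mul_self hv.symm, one_mul] at h₂
  rw [cycleOf_eq_singleton hsv, cycWt_singleton, hwt] at h₁ h₂
  rw [h₁, h₂, zero_add]

theorem eq_one_of_forall_apply_eq_self {w : GW m n} (hperm : ∀ v, w.perm v = v)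
    (hzero : ∀ a ∈ cycleWeights w, a = 0) : w = 1 := by
  ext v
  · simp [hperm v]
  · have := hzero _ (Multiset.mem_map_of_mem (cycWt w) (mem_def.1 (cycleOf_mem_cycles w v)))
    rwa [cycleOf_eq_singleton (hperm v), cycWt_singleton] at this

theorem eq_one_of_count_zero_cycleWeights {w : GW m n} (h : (cycleWeights w).count 0 = n) :
    w = 1 := by
  refine eq_one_of_forall_apply_eq_self (fun v => ?_) fun a ha =>
    (Multiset.count_eq_card.1 (le_antisymm (Multiset.count_le_card _ _)
      ((card_cycleWeights_le w).trans h.ge)) a ha).symm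
  by_contra hv
  have := count_zero_cycleWeights_le (mkTrans v (w.perm v) (-w.wt (w.perm v)) * w)
  rw [cycleWeights_mkTrans_mul_of_apply_ne hv, Multiset.count_cons_self, h] at this
  omega

theorem count_zero_cycleWeights_lt {w : GW m n} (hw : w ≠ 1) : (cycleWeights w).count 0 < n :=
  (count_zero_cycleWeights_le w).lt_of_ne fun h => hw (eq_one_of_count_zero_cycleWeights h)

variable {p : ℕ} {hpm : p ∣ m}

/-- The subgroup `pℤ/mℤ` of `ℤ/mℤ`: `G(m,p,n)` consists of the elements whose total weight
lies in it. -/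
def castKer (p : ℕ) (hpm : p ∣ m) : AddSubgroup (ZMod m) :=
  (ZMod.castHom hpm (ZMod p)).toAddMonoidHom.ker

theorem gmem_iff {w : GW m n} : Gmem p hpm w ↔ wtTot w ∈ castKer p hpm := by
  simp [Gmem, castKer]

theorem isRefl_mkTrans (p : ℕ) (hpm : p ∣ m) {i j : Fin n} (hij : i ≠ j) (c : ZMod m) :
    IsRefl p hpm (mkTrans i j c) := by
  refine ⟨by simp [Gmem, wtTot_mkTrans], ?_⟩
  obtain ⟨M, h₁, h₂⟩ := cycleWeights_mkTrans_mul (y := 1) (by simpa using hij) c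
  rw [mul_one] at h₂
  rw [cycleWeights_one, cycWt_one, cycWt_one] at h₁
  rw [cycWt_one, cycWt_one, add_zero] at h₂
  have hM := congrArg (Multiset.count 0) h₁
  simp only [Multiset.count_replicate_self, Multiset.count_cons_self] at hM
  rw [codimfix_eq, h₂, Multiset.count_cons_self]
  omega

theorem isRefl_mkDiag (v : Fin n) {d : ZMod m} (hd : d ≠ 0)
    (hdp : d ∈ castKer p hpm) : IsRefl p hpm (mkDiag v d) := by
  refine ⟨by rwa [gmem_iff, wtTot_mkDiag], ?_⟩
  obtain ⟨M, h₁, h₂⟩ := cycleWeights_mkDiag_mul 1 v d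
  rw [mul_one] at h₂
  rw [cycleWeights_one, cycWt_one] at h₁
  rw [cycWt_one, zero_add] at h₂
  have hM := congrArg (Multiset.count 0) h₁
  simp only [Multiset.count_replicate_self, Multiset.count_cons_self] at hM
  rw [codimfix_eq, h₂, Multiset.count_cons_of_ne hd.symm]
  omega

theorem IsRefl.eq_mkDiag_or_eq_mkTrans {t : GW m n} (ht : IsRefl p hpm t) :
    (∃ v d, d ∈ castKer p hpm ∧ t = mkDiag v d) ∨ ∃ i j c, i ≠ j ∧ t = mkTrans i j c := by
  obtain ⟨hG, hcdf⟩ := ht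
  rw [codimfix_eq] at hcdf
  have hcount := count_zero_cycleWeights_le t
  by_cases hperm : ∃ v, t.perm v ≠ v
  · obtain ⟨v, hv⟩ := hperm
    have h1 := eq_one_of_count_zero_cycleWeights (by
      rw [cycleWeights_mkTrans_mul_of_apply_ne hv, Multiset.count_cons_self]
      omega)
    exact Or.inr ⟨v, t.perm v, -t.wt (t.perm v), hv.symm,
      (eq_inv_of_mul_eq_one_right h1).trans (mkTrans_inv hv.symm _)⟩
  push Not at hperm
  obtain ⟨v, hv⟩ : ∃ v, t.wt v ≠ 0 := by
    by_contra! hwt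
    rw [show t = 1 from GW.ext (Equiv.ext hperm) (funext hwt), cycleWeights_one,
      Multiset.count_replicate_self] at hcdf
    omega
  obtain ⟨M, h₁, h₂⟩ := cycleWeights_mkDiag_mul t v (-t.wt v)
  rw [cycleOf_eq_singleton (hperm v), cycWt_singleton] at h₁ h₂
  rw [add_neg_cancel] at h₂
  have h1 := eq_one_of_count_zero_cycleWeights (by
    rw [h₂, Multiset.count_cons_self]
    rw [h₁, Multiset.count_cons_of_ne hv.symm] at hcdf hcount
    omega)
  have ht : t = mkDiag v (t.wt v) :=
    (eq_inv_of_mul_eq_one_right h1).trans (inv_eq_of_mul_eq_one_left (mkDiag_mul_mkDiag_neg v _))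
  refine Or.inl ⟨v, t.wt v, ?_, ht⟩
  rw [← wtTot_mkDiag v (t.wt v), ← ht, ← gmem_iff]
  exact hG

theorem exists_cycleWeights_mkDiag_mul_eq {w : GW m n} {a : ZMod m} {M : Multiset (ZMod m)}
    (hw : cycleWeights w = a ::ₘ M) : ∃ v, ∀ d, cycleWeights (mkDiag v d * w) = (a + d) ::ₘ M := by
  obtain ⟨C, hC, rfl⟩ := Multiset.mem_map.1 (hw ▸ Multiset.mem_cons_self a M)
  obtain ⟨v, rfl⟩ := mem_cycles.1 hC
  refine ⟨v, fun d => ?_⟩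
  obtain ⟨M', h₁, h₂⟩ := cycleWeights_mkDiag_mul w v d
  rwa [← (Multiset.cons_inj_right _).1 (h₁.symm.trans hw)]

theorem exists_cycleWeights_mkTrans_mul_eq {w : GW m n} {a b : ZMod m} {M : Multiset (ZMod m)}
    (hw : cycleWeights w = a ::ₘ b ::ₘ M) :
    ∃ i j, i ≠ j ∧ ∀ c, cycleWeights (mkTrans i j c * w) = (a + b) ::ₘ M := by
  obtain ⟨C, hC, rfl⟩ := Multiset.mem_map.1 (hw ▸ Multiset.mem_cons_self _ _)
  obtain ⟨R, hR⟩ := Multiset.exists_cons_of_mem hC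
  rw [cycleWeights, hR, Multiset.map_cons, Multiset.cons_inj_right] at hw
  obtain ⟨D, hD, rfl⟩ := Multiset.mem_map.1 (hw ▸ Multiset.mem_cons_self _ _)
  have hCD : C ≠ D := fun h => (Multiset.nodup_cons.1 (hR ▸ (cycles w).nodup)).1 (h ▸ hD)
  obtain ⟨i, rfl⟩ := mem_cycles.1 hC
  obtain ⟨j, rfl⟩ := mem_cycles.1 (mem_def.2 (hR ▸ Multiset.mem_cons_of_mem hD))
  have hij : ¬w.perm.SameCycle i j := fun h => hCD (cycleOf_eq_cycleOf h)
  refine ⟨i, j, fun h => hij (h ▸ SameCycle.refl _ _), fun c => ?_⟩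
  obtain ⟨M', h₁, h₂⟩ := cycleWeights_mkTrans_mul hij c
  rw [cycleWeights, hR, Multiset.map_cons, Multiset.cons_inj_right, hw,
    Multiset.cons_inj_right] at h₁
  rwa [h₁]

/-! ### Reflection length -/

theorem IsRefl.weightMove {t : GW m n} (ht : IsRefl p hpm t) (x : GW m n) :
    WeightMove (castKer p hpm) (cycleWeights x) (cycleWeights (t * x)) := by
  rcases ht.eq_mkDiag_or_eq_mkTrans with ⟨v, d, hd, rfl⟩ | ⟨i, j, c, hij, rfl⟩
  · obtain ⟨M, h₁, h₂⟩ := cycleWeights_mkDiag_mul x v d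
    rw [h₁, h₂]
    exact .shift _ _ _ hd
  by_cases hx : x.perm.SameCycle i j
  · obtain ⟨M, h₁, h₂⟩ := cycleWeights_mkTrans_mul (y := mkTrans i j c * x)
      (not_sameCycle_swap_mul_of_sameCycle hij hx) c
    rw [← mul_assoc, mkTrans_mul_self hij, one_mul] at h₂
    rw [h₁, h₂]
    exact .split _ _ _
  · obtain ⟨M, h₁, h₂⟩ := cycleWeights_mkTrans_mul hx c
    rw [h₁, h₂]
    exact .merge _ _ _

theorem exists_isBlockPartition_of_prod {l : List (GW m n)} (hl : ∀ t ∈ l, IsRefl p hpm t) :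
    ∃ P, IsBlockPartition (castKer p hpm) (cycleWeights l.prod) P ∧
      n + Multiset.card (cycleWeights l.prod) ≤ l.length + partitionValue P := by
  induction l with
  | nil =>
    refine ⟨Multiset.replicate n {0}, ?_, ?_⟩
    · rw [List.prod_nil, cycleWeights_one]
      exact isBlockPartition_replicate_zero n
    · simp [cycleWeights_one, partitionValue_replicate_zero]
      omega
  | cons t l ih =>
    obtain ⟨P, hP, hle⟩ := ih fun s hs => hl s (List.mem_cons_of_mem t hs)
    obtain ⟨P', hP', hle'⟩ :=
      ((hl t List.mem_cons_self).weightMove l.prod).exists_isBlockPartition hP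
    exact ⟨P', by rwa [List.prod_cons], by rw [List.prod_cons, List.length_cons]; omega⟩

theorem exists_mkTrans_mul_isBlockPartition {w : GW m n} {a b : ZMod m} {B : Multiset (ZMod m)}
    {P₀ : Multiset (Multiset (ZMod m))}
    (hP : IsBlockPartition (castKer p hpm) (cycleWeights w) ((a ::ₘ b ::ₘ B) ::ₘ P₀)) :
    ∃ i j, i ≠ j ∧ cycleWeights w = a ::ₘ b ::ₘ (B + P₀.sum) ∧
      cycleWeights (mkTrans i j 0 * w) = (a + b) ::ₘ (B + P₀.sum) ∧
      IsBlockPartition (castKer p hpm) (cycleWeights (mkTrans i j 0 * w))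
        (((a + b) ::ₘ B) ::ₘ P₀) := by
  have hW := (isBlockPartition_cons.1 hP).1
  rw [Multiset.cons_add, Multiset.cons_add] at hW
  obtain ⟨i, j, hij, hy⟩ := exists_cycleWeights_mkTrans_mul_eq hW
  exact ⟨i, j, hij, hW, hy 0, (hy 0).symm ▸ hP.merge_of_eq_cons.1⟩

theorem exists_isRefl_mul_eq_of_ne_one {w : GW m n} (hw : w ≠ 1) {P : Multiset (Multiset (ZMod m))}
    (hP : IsBlockPartition (castKer p hpm) (cycleWeights w) P) :
    ∃ t y P', IsRefl p hpm t ∧ t * y = w ∧ IsBlockPartition (castKer p hpm) (cycleWeights y) P' ∧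
      Multiset.card (cycleWeights y) + partitionValue P + 1 =
        Multiset.card (cycleWeights w) + partitionValue P' := by
  by_cases hne : ∃ a ∈ cycleWeights w, a ≠ 0
  · obtain ⟨a, ha, ha0⟩ := hne
    rcases hP.eq_cons_cons_or_eq_singleton_cons ha with ⟨b, B, P₀, rfl⟩ | ⟨P₀, rfl⟩
    · obtain ⟨i, j, hij, hW, hy, hP'⟩ := exists_mkTrans_mul_isBlockPartition hP
      refine ⟨mkTrans i j 0, _, _, isRefl_mkTrans p hpm hij 0,
        by rw [← mul_assoc, mkTrans_mul_self hij, one_mul], hP', ?_⟩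
      rw [hy, hW, hP.merge_of_eq_cons.2]
      simp only [Multiset.card_cons]
      omega
    · obtain ⟨hW, -, haH, hP₀⟩ := isBlockPartition_cons.1 hP
      rw [Multiset.singleton_add] at hW
      obtain ⟨v, hy⟩ := exists_cycleWeights_mkDiag_mul_eq hW
      refine ⟨mkDiag v a, mkDiag v (-a) * w, {0} ::ₘ P₀, isRefl_mkDiag v ha0 (by simpa using haH),
        by rw [← mul_assoc, mkDiag_mul_mkDiag_neg, one_mul], ?_, ?_⟩
      · rw [hy, add_neg_cancel]
        exact isBlockPartition_cons.2 ⟨by simp, by simp, by simp, hP₀⟩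
      · simp [hy, hW, blockValue, ha0]
        omega
  -- all cycle weights vanish, so `w` moves some point, which we split off
  push Not at hne
  obtain ⟨v, hv⟩ : ∃ v, w.perm v ≠ v := by
    by_contra! hperm
    exact hw (eq_one_of_forall_apply_eq_self hperm hne)
  have hy := cycleWeights_mkTrans_mul_of_apply_ne hv
  refine ⟨mkTrans v (w.perm v) (-w.wt (w.perm v)), _, {0} ::ₘ P, isRefl_mkTrans p hpm hv.symm _,
    by rw [← mul_assoc, mkTrans_mul_self hv.symm, one_mul], ?_, ?_⟩
  · rw [hy]
    exact isBlockPartition_cons.2 ⟨by simp [hP.1], by simp, by simp, hP.1 ▸ hP⟩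
  · simp [hy, blockValue]
    omega

theorem exists_prod_eq_of_isBlockPartition {w : GW m n} {P : Multiset (Multiset (ZMod m))}
    (hP : IsBlockPartition (castKer p hpm) (cycleWeights w) P) :
    ∃ l : List (GW m n), (∀ t ∈ l, IsRefl p hpm t) ∧ l.prod = w ∧
      l.length + partitionValue P ≤ n + Multiset.card (cycleWeights w) := by
  induction hk : n + Multiset.card (cycleWeights w) - partitionValue P
    using Nat.strong_induction_on generalizing w P with
  | _ k ih =>
    have hle := hP.partitionValue_le
    by_cases hw : w = 1
    · subst hw
      refine ⟨[], by simp, rfl, ?_⟩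
      have := count_zero_cycleWeights_le (1 : GW m n)
      simp only [List.length_nil]
      omega
    have := count_zero_cycleWeights_lt hw
    obtain ⟨t, y, P', ht, rfl, hP', hcard⟩ := exists_isRefl_mul_eq_of_ne_one hw hP
    obtain ⟨l, hl, rfl, hlen⟩ := ih _ (by omega) hP' rfl
    refine ⟨t :: l, fun s hs => ?_, rfl, by simp only [List.length_cons]; omega⟩
    rcases List.mem_cons.1 hs with rfl | hs
    exacts [ht, hl s hs]

theorem lR_prod_le_length {l : List (GW m n)} (hl : ∀ t ∈ l, IsRefl p hpm t) :
    lR p hpm l.prod ≤ l.length :=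
  Nat.sInf_le ⟨l, hl, rfl, rfl⟩

theorem exists_prod_eq_of_length_eq_lR {w : GW m n}
    (h : ∃ l : List (GW m n), (∀ t ∈ l, IsRefl p hpm t) ∧ l.prod = w) :
    ∃ l : List (GW m n), (∀ t ∈ l, IsRefl p hpm t) ∧ l.length = lR p hpm w ∧ l.prod = w := by
  obtain ⟨l, hl, rfl⟩ := h
  have hne : {k | ∃ l' : List (GW m n), (∀ t ∈ l', IsRefl p hpm t) ∧ l'.length = k ∧
      l'.prod = l.prod}.Nonempty := ⟨_, l, hl, rfl, rfl⟩
  exact Nat.sInf_mem hne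

theorem codimfix_le_lR {w : GW m n}
    (h : ∃ l : List (GW m n), (∀ t ∈ l, IsRefl p hpm t) ∧ l.prod = w) :
    codimfix w ≤ lR p hpm w := by
  obtain ⟨l, hl, hlen, rfl⟩ := exists_prod_eq_of_length_eq_lR h
  obtain ⟨P, hP, hle⟩ := exists_isBlockPartition_of_prod hl
  have := hP.partitionValue_le
  rw [codimfix_eq]
  omega

theorem IsRefl.lR_eq_one {t : GW m n} (ht : IsRefl p hpm t) : lR p hpm t = 1 := by
  have hle : lR p hpm t ≤ 1 := by simpa using lR_prod_le_length (l := [t]) (by simpa using ht)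
  have hge := codimfix_le_lR (p := p) (hpm := hpm) (w := t) ⟨[t], by simpa using ht, by simp⟩
  rw [ht.2] at hge
  omega

theorem lR_mul_le {t y : GW m n} (ht : IsRefl p hpm t)
    (hy : ∃ l : List (GW m n), (∀ s ∈ l, IsRefl p hpm s) ∧ l.prod = y) :
    lR p hpm (t * y) ≤ lR p hpm y + 1 := by
  obtain ⟨l, hl, hlen, rfl⟩ := exists_prod_eq_of_length_eq_lR hy
  rw [← hlen, ← List.prod_cons]
  refine lR_prod_le_length fun s hs => ?_
  rcases List.mem_cons.1 hs with rfl | hs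
  exacts [ht, hl s hs]

theorem lR_add_partitionValue_le {w : GW m n} {P : Multiset (Multiset (ZMod m))}
    (hP : IsBlockPartition (castKer p hpm) (cycleWeights w) P) :
    lR p hpm w + partitionValue P ≤ n + Multiset.card (cycleWeights w) := by
  obtain ⟨l, hl, rfl, hlen⟩ := exists_prod_eq_of_isBlockPartition hP
  have := lR_prod_le_length hl
  omega

theorem exists_isBlockPartition_le_lR_add {w : GW m n} (hw : Gmem p hpm w) :
    ∃ P, IsBlockPartition (castKer p hpm) (cycleWeights w) P ∧
      n + Multiset.card (cycleWeights w) ≤ lR p hpm w + partitionValue P := by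
  obtain ⟨P₀, hP₀⟩ := exists_isBlockPartition (H := castKer p hpm)
    (W := cycleWeights w) (by rwa [sum_cycleWeights, ← gmem_iff])
  obtain ⟨l, hl, rfl, -⟩ := exists_prod_eq_of_isBlockPartition hP₀
  obtain ⟨l', hl', hlen, hprod⟩ := exists_prod_eq_of_length_eq_lR ⟨l, hl, rfl⟩
  rw [← hlen, ← hprod]
  exact exists_isBlockPartition_of_prod hl'

theorem exists_lR_mkTrans_mul_add_one_eq {w : GW m n} (hw : Gmem p hpm w)
    (hlt : codimfix w < lR p hpm w) :
    ∃ i j, i ≠ j ∧ lR p hpm (mkTrans i j 0 * w) + 1 = lR p hpm w ∧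
      codimfix w ≤ codimfix (mkTrans i j 0 * w) := by
  obtain ⟨P, hP, hPle⟩ := exists_isBlockPartition_le_lR_add hw
  have hopt : ∀ P', IsBlockPartition (castKer p hpm) (cycleWeights w) P' →
      partitionValue P' ≤ partitionValue P := fun P' hP' => by
    have := lR_add_partitionValue_le hP'
    omega
  obtain ⟨B, hB, a, b, B', rfl, hab⟩ : ∃ B ∈ P, ∃ a b B', B = a ::ₘ b ::ₘ B' ∧ a + b ≠ 0 := by
    by_contra! hpair
    have := hP.card_add_count_le_partitionValue hopt hpair
    have := lR_add_partitionValue_le hP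
    rw [codimfix_eq] at hlt
    omega
  obtain ⟨P₀, rfl⟩ := Multiset.exists_cons_of_mem hB
  obtain ⟨i, j, hij, hW, hy, hP'⟩ := exists_mkTrans_mul_isBlockPartition hP
  have hle := lR_add_partitionValue_le hP'
  have hge := lR_mul_le (isRefl_mkTrans p hpm hij 0)
    (exists_prod_eq_of_isBlockPartition hP' |>.imp fun _ h => ⟨h.1, h.2.1⟩)
  rw [← mul_assoc, mkTrans_mul_self hij, one_mul] at hge
  refine ⟨i, j, hij, ?_, ?_⟩
  · rw [hP.merge_of_eq_cons.2, hy] at hle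
    rw [hW] at hPle
    simp only [Multiset.card_cons] at hle hPle
    omega
  · have := count_zero_cycleWeights_le w
    rw [codimfix_eq, codimfix_eq, hy, hW, Multiset.count_cons_of_ne hab.symm,
      Multiset.count_cons, Multiset.count_cons]
    omega

end GW

theorem stmt3_general (m p n : ℕ) (hpm : p ∣ m)
    (w : GW m n) (hw : GW.Gmem p hpm w)
    (hlt : GW.codimfix w < GW.lR p hpm w) :
    ∃ t : GW m n, GW.IsRefl p hpm t ∧
      t ∈ GW.interval p hpm (GW.lR p hpm) w ∧
      t ∉ GW.interval p hpm GW.codimfix w := by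
  obtain ⟨i, j, hij, hlR, hcdf⟩ := GW.exists_lR_mkTrans_mul_add_one_eq hw hlt
  have ht := GW.isRefl_mkTrans p hpm hij (0 : ZMod m)
  refine ⟨_, ht, ⟨ht.1, ?_⟩, fun ⟨_, h⟩ => ?_⟩
  · rw [GW.leF, GW.mkTrans_inv hij, ht.lR_eq_one]
    omega
  · rw [GW.leF, GW.mkTrans_inv hij, ht.2] at h
    omega

/-- Let `w ∈ G(m,p,n)`.  If `ℓ_R(w) > codimfix(w)`, then there exists a reflection `t`
of `G(m,p,n)` such that `t ∈ [id, w]_{ℓ_R}` but `t ∉ [id, w]_{cdf}`. -/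
theorem stmt3 (m p n : ℕ) (hm : 0 < m) (hp : 0 < p) (hn : 0 < n) (hpm : p ∣ m)
    (w : GW m n) (hw : GW.Gmem p hpm w)
    (hlt : GW.codimfix w < GW.lR p hpm w) :
    ∃ t : GW m n, GW.IsRefl p hpm t ∧
      t ∈ GW.interval p hpm (GW.lR p hpm) w ∧
      t ∉ GW.interval p hpm GW.codimfix w :=
  stmt3_general m p n hpm w hw hlt
end

section
/- Let W be a finite subgroup of GL(V) for a finite-dimensional complex vector space V, generated by its set R of reflections (elements whose fixed space ker(t − 1) has codimension 1), let ℓ_R be the reflection length and codimfix(g) := dim V − dim ker(g − 1). Let w ∈ W with ℓ_R(w) = codimfix(w). Then [id, w]_{ℓ_R} ⊆ [id, w]_{cdf}, and moreover ℓ_R(u) = codimfix(u) for every u ∈ [id, w]_{ℓ_R}. -/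
/-!
`codimfix` is subadditive, because `gh - 1 = (g - 1) h + (h - 1)` puts the range of `gh - 1`
inside the sum of the ranges of `g - 1` and `h - 1`; since every reflection has `codimfix = 1`,
this gives `codimfix ≤ ℓ_R` on `W`. For `u ≤_{ℓ_R} w` with `ℓ_R w = codimfix w`,
`codimfix w ≤ codimfix u + codimfix (u⁻¹w) ≤ ℓ_R u + ℓ_R (u⁻¹w) = ℓ_R w = codimfix w`,
so all these inequalities are equalities.
-/

namespace CRG

variable {V : Type*} [AddCommGroup V] [Module ℂ V] [FiniteDimensional ℂ V]

/-- The codimension of the fixed space of an invertible linear map `g` on `V`: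
`codimfix g = dim V − dim ker(g − 1)`. -/
noncomputable def cdf (g : (V →ₗ[ℂ] V)ˣ) : ℕ :=
  Module.finrank ℂ V - Module.finrank ℂ (LinearMap.ker ((g : V →ₗ[ℂ] V) - LinearMap.id))

/-- `t` is a reflection of the group `W ⊆ GL(V)`: an element of `W` whose fixed space has
codimension 1. -/
def IsRefl (W : Subgroup (V →ₗ[ℂ] V)ˣ) (t : (V →ₗ[ℂ] V)ˣ) : Prop :=
  t ∈ W ∧ cdf t = 1

/-- The reflection length of `w`: the least `k` such that `w` is a product of `k`
reflections of `W`. -/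
noncomputable def lR (W : Subgroup (V →ₗ[ℂ] V)ˣ) (w : (V →ₗ[ℂ] V)ˣ) : ℕ :=
  sInf {k | ∃ l : List (V →ₗ[ℂ] V)ˣ, (∀ t ∈ l, IsRefl W t) ∧ l.length = k ∧ l.prod = w}

/-- The order `≤_f` determined by a subadditive function `f`:
`x ≤_f y ↔ f x + f (x⁻¹y) = f y`. -/
def leF (f : (V →ₗ[ℂ] V)ˣ → ℕ) (x y : (V →ₗ[ℂ] V)ˣ) : Prop :=
  f x + f (x⁻¹ * y) = f y

/-- The interval `[id, w]_f` inside the poset `(W, ≤_f)`. -/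
def interval (W : Subgroup (V →ₗ[ℂ] V)ˣ) (f : (V →ₗ[ℂ] V)ˣ → ℕ) (w : (V →ₗ[ℂ] V)ˣ) :
    Set (V →ₗ[ℂ] V)ˣ :=
  {u | u ∈ W ∧ leF f u w}

end CRG

namespace CRG

variable {V : Type*} [AddCommGroup V] [Module ℂ V]

lemma ker_inv_sub_id (g : (V →ₗ[ℂ] V)ˣ) :
    LinearMap.ker ((↑g⁻¹ : V →ₗ[ℂ] V) - LinearMap.id)
      = LinearMap.ker ((g : V →ₗ[ℂ] V) - LinearMap.id) := by
  ext x
  simp only [LinearMap.mem_ker, LinearMap.sub_apply, LinearMap.id_apply, sub_eq_zero]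
  constructor <;> intro h <;> conv_lhs => rw [← h]
  · rw [← Module.End.mul_apply, Units.mul_inv, Module.End.one_apply]
  · rw [← Module.End.mul_apply, Units.inv_mul, Module.End.one_apply]

lemma cdf_inv (g : (V →ₗ[ℂ] V)ˣ) : cdf g⁻¹ = cdf g := by
  rw [cdf, cdf, ker_inv_sub_id]

lemma cdf_one [FiniteDimensional ℂ V] : cdf (1 : (V →ₗ[ℂ] V)ˣ) = 0 := by
  rw [cdf, Units.val_one, Module.End.one_eq_id, sub_self, LinearMap.ker_zero, finrank_top,
    Nat.sub_self]

lemma cdf_eq_finrank_range [FiniteDimensional ℂ V] (g : (V →ₗ[ℂ] V)ˣ) :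
    cdf g = Module.finrank ℂ (LinearMap.range ((g : V →ₗ[ℂ] V) - LinearMap.id)) := by
  rw [cdf, ← LinearMap.finrank_range_add_finrank_ker ((g : V →ₗ[ℂ] V) - LinearMap.id)]
  omega

lemma range_mul_sub_id_le (g h : (V →ₗ[ℂ] V)ˣ) :
    LinearMap.range ((↑(g * h) : V →ₗ[ℂ] V) - LinearMap.id)
      ≤ LinearMap.range ((g : V →ₗ[ℂ] V) - LinearMap.id)
        ⊔ LinearMap.range ((h : V →ₗ[ℂ] V) - LinearMap.id) := by
  rintro _ ⟨x, rfl⟩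
  refine Submodule.mem_sup.2 ⟨_, ⟨(h : V →ₗ[ℂ] V) x, rfl⟩, _, ⟨x, rfl⟩, ?_⟩
  simp

lemma cdf_mul_le [FiniteDimensional ℂ V] (g h : (V →ₗ[ℂ] V)ˣ) : cdf (g * h) ≤ cdf g + cdf h := by
  simp only [cdf_eq_finrank_range]
  exact (Submodule.finrank_mono (range_mul_sub_id_le g h)).trans
    (Submodule.finrank_add_le_finrank_add_finrank _ _)

lemma cdf_list_prod_le_length [FiniteDimensional ℂ V] {l : List (V →ₗ[ℂ] V)ˣ}
    (hl : ∀ t ∈ l, cdf t = 1) : cdf l.prod ≤ l.length := by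
  induction l with
  | nil => simp [cdf_one]
  | cons t l ih =>
    rw [List.prod_cons, List.length_cons, add_comm, ← hl t List.mem_cons_self]
    exact (cdf_mul_le t l.prod).trans
      (Nat.add_le_add_left (ih fun s hs => hl s (List.mem_cons_of_mem t hs)) _)

lemma isRefl_inv {W : Subgroup (V →ₗ[ℂ] V)ˣ} {t : (V →ₗ[ℂ] V)ˣ} (ht : IsRefl W t) :
    IsRefl W t⁻¹ :=
  ⟨inv_mem ht.1, (cdf_inv t).trans ht.2⟩

/-- The set of reflections is closed under inversion, so the group it generates is the monoid
it generates. -/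
lemma exists_list_isRefl_prod_eq {W : Subgroup (V →ₗ[ℂ] V)ˣ}
    (hgen : Subgroup.closure {t | IsRefl W t} = W) {w : (V →ₗ[ℂ] V)ˣ} (hw : w ∈ W) :
    ∃ l : List (V →ₗ[ℂ] V)ˣ, (∀ t ∈ l, IsRefl W t) ∧ l.prod = w := by
  have hinv : {t | IsRefl W t}⁻¹ = {t | IsRefl W t} :=
    Set.inv_eq_self_iff_inv_subset.2 fun t ht => by simpa using isRefl_inv ht
  rw [← hgen, ← Subgroup.mem_toSubmonoid, Subgroup.closure_toSubmonoid, hinv,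
    Set.union_self] at hw
  exact Submonoid.exists_list_of_mem_closure hw

lemma exists_list_isRefl_length_eq_lR {W : Subgroup (V →ₗ[ℂ] V)ˣ}
    (hgen : Subgroup.closure {t | IsRefl W t} = W) {w : (V →ₗ[ℂ] V)ˣ} (hw : w ∈ W) :
    ∃ l : List (V →ₗ[ℂ] V)ˣ, (∀ t ∈ l, IsRefl W t) ∧ l.length = lR W w ∧ l.prod = w := by
  obtain ⟨l, hl, hprod⟩ := exists_list_isRefl_prod_eq hgen hw
  exact Nat.sInf_mem (s := {k | ∃ l : List (V →ₗ[ℂ] V)ˣ, (∀ t ∈ l, IsRefl W t) ∧ l.length = k ∧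
    l.prod = w}) ⟨l.length, l, hl, rfl, hprod⟩

lemma cdf_le_lR [FiniteDimensional ℂ V] {W : Subgroup (V →ₗ[ℂ] V)ˣ}
    (hgen : Subgroup.closure {t | IsRefl W t} = W) {w : (V →ₗ[ℂ] V)ˣ} (hw : w ∈ W) :
    cdf w ≤ lR W w := by
  obtain ⟨l, hl, hlen, rfl⟩ := exists_list_isRefl_length_eq_lR hgen hw
  exact hlen ▸ cdf_list_prod_le_length fun t ht => (hl t ht).2

lemma leF_of_leF_of_le {f g : (V →ₗ[ℂ] V)ˣ → ℕ} {u w : (V →ₗ[ℂ] V)ˣ}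
    (hsub : f w ≤ f u + f (u⁻¹ * w)) (hu : f u ≤ g u) (hv : f (u⁻¹ * w) ≤ g (u⁻¹ * w))
    (hw : g w = f w) (h : leF g u w) : leF f u w ∧ g u = f u := by
  unfold leF at *
  omega

end CRG

open CRG

theorem stmt4_general {V : Type*} [AddCommGroup V] [Module ℂ V] [FiniteDimensional ℂ V]
    (W : Subgroup (V →ₗ[ℂ] V)ˣ)
    (hgen : Subgroup.closure {t | CRG.IsRefl W t} = W)
    (w : (V →ₗ[ℂ] V)ˣ) (hw : w ∈ W)
    (heq : lR W w = cdf w) :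
    interval W (lR W) w ⊆ interval W cdf w ∧
    ∀ u ∈ interval W (lR W) w, lR W u = cdf u := by
  have key : ∀ u ∈ interval W (lR W) w, leF cdf u w ∧ lR W u = cdf u := by
    rintro u ⟨huW, hle⟩
    refine leF_of_leF_of_le ?_ (cdf_le_lR hgen huW) (cdf_le_lR hgen (mul_mem (inv_mem huW) hw))
      heq hle
    simpa using cdf_mul_le u (u⁻¹ * w)
  exact ⟨fun u hu => ⟨hu.1, (key u hu).1⟩, fun u hu => (key u hu).2⟩

/-- Let `W` be a finite complex reflection group (a finite subgroup of `GL(V)` generated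
by its reflections) and `w ∈ W` with `ℓ_R(w) = codimfix(w)`.  Then
`[id, w]_{ℓ_R} ⊆ [id, w]_{cdf}`, and moreover `ℓ_R(u) = codimfix(u)` for every
`u ∈ [id, w]_{ℓ_R}`. -/
theorem stmt4 {V : Type*} [AddCommGroup V] [Module ℂ V] [FiniteDimensional ℂ V]
    (W : Subgroup (V →ₗ[ℂ] V)ˣ) (hfin : Finite W)
    (hgen : Subgroup.closure {t | CRG.IsRefl W t} = W)
    (w : (V →ₗ[ℂ] V)ˣ) (hw : w ∈ W)
    (heq : lR W w = cdf w) :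
    interval W (lR W) w ⊆ interval W cdf w ∧
    ∀ u ∈ interval W (lR W) w, lR W u = cdf u :=
  stmt4_general W hgen w hw heq
end
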